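/- arXiv:2503.01008 — 10 statements merged into one kernel-verified Lean document; each statement's English description precedes it below -/
import Mathlib

section
/- For every integer k ≥ 1 and every θ ∈ ℝ, setting f(θ) = cos(kθ) and v(θ) = (1 − cos(kθ))/k, one has (f(θ) − v(θ))·cos θ − (f′(θ) − v′(θ))·sin θ = a⁻_k · cos((k−1)θ) − b⁻_k · cos((k+1)θ) − (1/k)·cos θ, where a⁻_k = (1/2)(k+1)(1 + 1/k) and b⁻_k = (1/2)(k−1)(1 + 1/k). -/
/-- Action of the operator `L⁻ f = {f - v(f), sin θ}` on `f(θ) = cos(kθ)`,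
with `v(θ) = (1 - cos(kθ))/k` the primitive vanishing at `0` of `H f`. -/
theorem Lminus_on_cos (k : ℕ) (hk : 1 ≤ k) (θ : ℝ)
    (f v : ℝ → ℝ)
    (hf : f = fun x => Real.cos (k * x))
    (hv : v = fun x => (1 - Real.cos (k * x)) / k) :
    (f θ - v θ) * Real.cos θ - (deriv f θ - deriv v θ) * Real.sin θ
      = ((1 / 2) * ((k : ℝ) + 1) * (1 + 1 / k)) * Real.cos (((k : ℝ) - 1) * θ)
        - ((1 / 2) * ((k : ℝ) - 1) * (1 + 1 / k)) * Real.cos (((k : ℝ) + 1) * θ)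
        - (1 / k) * Real.cos θ := by
  have hk0 : (k : ℝ) ≠ 0 := Nat.cast_ne_zero.mpr (by omega)
  have hc : HasDerivAt (fun x : ℝ => Real.cos (k * x)) (-Real.sin (k * θ) * k) θ := by
    simpa [Function.comp_def] using (Real.hasDerivAt_cos ((k : ℝ) * θ)).comp θ
      ((hasDerivAt_id θ).const_mul (k : ℝ))
  have hdf : deriv f θ = -Real.sin (k * θ) * k := by rw [hf]; exact hc.deriv
  have hdv : deriv v θ = Real.sin (k * θ) := by
    rw [hv]
    have : HasDerivAt (fun x : ℝ => (1 - Real.cos (k * x)) / k)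
        ((0 - (-Real.sin (k * θ) * k)) / k) θ :=
      ((hasDerivAt_const θ (1:ℝ)).sub hc).div_const _
    rw [this.deriv]; field_simp; ring
  have h1 : Real.cos (((k : ℝ) - 1) * θ) =
      Real.cos (k * θ) * Real.cos θ + Real.sin (k * θ) * Real.sin θ := by
    rw [sub_mul, one_mul, Real.cos_sub]
  have h2 : Real.cos (((k : ℝ) + 1) * θ) =
      Real.cos (k * θ) * Real.cos θ - Real.sin (k * θ) * Real.sin θ := by
    rw [add_mul, one_mul, Real.cos_add]
  rw [hdf, hdv, hf, hv, h1, h2]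
  field_simp
  ring
end

section
/- For every integer k ≥ 1 and every θ ∈ ℝ, setting f(θ) = e_{s,k}(θ) = sin((k+1)θ)/(k+1) − sin(kθ)/k and v(θ) = −sin((k+1)θ)/(k+1)² + sin(kθ)/k², one has (f(θ) + v(θ))·cos θ − (f′(θ) + v′(θ))·sin θ = −d⁺_{k+1}·e_{s,k+1}(θ) − (d⁺_{k+1} − d⁺_k)·e_{s,k}(θ) + d⁺_k·e_{s,k−1}(θ), where d⁺_m = (m−1)²(m+1)/(2m²) and e_{s,0}(θ) = sin θ. -/
/-- The basis functions `e_{s,k}` of the weighted Sobolev space `ℋ`. -/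
noncomputable def eS (k : ℕ) (θ : ℝ) : ℝ :=
  if k = 0 then Real.sin θ
  else Real.sin (((k : ℝ) + 1) * θ) / ((k : ℝ) + 1) - Real.sin ((k : ℝ) * θ) / k

/-- The coefficients `d⁺_m = (m-1)²(m+1)/(2m²)`. -/
noncomputable def dPlus (m : ℕ) : ℝ := ((m : ℝ) - 1) ^ 2 * ((m : ℝ) + 1) / (2 * (m : ℝ) ^ 2)

/-- Action of the operator `L⁺ f = {f + v(f), sin θ}` on `f = e_{s,k}`,
with `v(θ) = -sin((k+1)θ)/(k+1)² + sin(kθ)/k²` the primitive vanishing at `0` of `H f`. -/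
theorem Lplus_on_eS (k : ℕ) (hk : 1 ≤ k) (θ : ℝ)
    (f v : ℝ → ℝ)
    (hf : f = eS k)
    (hv : v = fun x => -Real.sin (((k : ℝ) + 1) * x) / ((k : ℝ) + 1) ^ 2
        + Real.sin ((k : ℝ) * x) / (k : ℝ) ^ 2) :
    (f θ + v θ) * Real.cos θ - (deriv f θ + deriv v θ) * Real.sin θ
      = -dPlus (k + 1) * eS (k + 1) θ - (dPlus (k + 1) - dPlus k) * eS k θ
        + dPlus k * eS (k - 1) θ := by
  have hkne : k ≠ 0 := by omega
  set n : ℝ := (k : ℝ) with hn_def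
  have hcast : (1:ℝ) ≤ n := by rw [hn_def]; exact_mod_cast hk
  have hn0 : n ≠ 0 := by linarith
  have hn1 : n + 1 ≠ 0 := by linarith
  have hn2 : n + 2 ≠ 0 := by linarith
  have hsin : ∀ (c x : ℝ), HasDerivAt (fun y => Real.sin (c * y)) (Real.cos (c * x) * c) x := by
    intro c x
    simpa [Function.comp_def] using (Real.hasDerivAt_sin (c * x)).comp x ((hasDerivAt_id x).const_mul c)
  have hfe : f = fun x => Real.sin ((n + 1) * x) / (n + 1) - Real.sin (n * x) / n := by
    funext x; simp [hf, eS, hkne, hn_def]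
  have hf' : deriv f θ = Real.cos ((n + 1) * θ) - Real.cos (n * θ) := by
    erw [hfe, (((hsin (n+1) θ).div_const (n+1)).sub ((hsin n θ).div_const n)).deriv]
    field_simp
  have hv' : deriv v θ = -Real.cos ((n + 1) * θ) / (n + 1) + Real.cos (n * θ) / n := by
    erw [hv, ((((hsin (n+1) θ).neg.div_const ((n+1)^2)).add ((hsin n θ).div_const (n^2)))).deriv]
    field_simp
  have h1 : Real.sin ((n+1)*θ) * Real.cos θ = (Real.sin ((n+2)*θ) + Real.sin (n*θ)) / 2 := by
    rw [show (n+2)*θ = (n+1)*θ + θ by ring, show n*θ = (n+1)*θ - θ by ring,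
      Real.sin_add, Real.sin_sub]; ring
  have h2 : Real.cos ((n+1)*θ) * Real.sin θ = (Real.sin ((n+2)*θ) - Real.sin (n*θ)) / 2 := by
    rw [show (n+2)*θ = (n+1)*θ + θ by ring, show n*θ = (n+1)*θ - θ by ring,
      Real.sin_add, Real.sin_sub]; ring
  have h3 : Real.sin (n*θ) * Real.cos θ = (Real.sin ((n+1)*θ) + Real.sin ((n-1)*θ)) / 2 := by
    rw [show (n+1)*θ = n*θ + θ by ring, show (n-1)*θ = n*θ - θ by ring,
      Real.sin_add, Real.sin_sub]; ring
  have h4 : Real.cos (n*θ) * Real.sin θ = (Real.sin ((n+1)*θ) - Real.sin ((n-1)*θ)) / 2 := by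
    rw [show (n+1)*θ = n*θ + θ by ring, show (n-1)*θ = n*θ - θ by ring,
      Real.sin_add, Real.sin_sub]; ring
  have hE1 : eS (k+1) θ = Real.sin ((n+2)*θ) / (n+2) - Real.sin ((n+1)*θ) / (n+1) := by
    unfold eS; rw [if_neg (by omega), hn_def]; push_cast; ring_nf
  have hE2 : eS k θ = Real.sin ((n+1)*θ) / (n+1) - Real.sin (n*θ) / n := by
    unfold eS; rw [if_neg hkne]
  have hd1 : dPlus (k+1) = n^2 * (n+2) / (2*(n+1)^2) := by
    unfold dPlus; rw [hn_def]; push_cast; ring_nf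
  have hd0 : dPlus k = (n-1)^2 * (n+1) / (2*n^2) := by
    unfold dPlus; rw [hn_def]
  rw [hf', hv']
  simp only [hf, hv]
  rw [hE1, hE2, hd1, hd0]
  by_cases hk1 : k = 1
  · subst hk1
    have hE3 : eS (1-1) θ = Real.sin θ := by simp [eS]
    rw [hE3]
    norm_num at h1 h2 h3 h4 ⊢
    linear_combination (norm := (field_simp; ring))
      ((1:ℝ)/4) * h1 - ((1:ℝ)/2) * h2
  · have hm : n - 1 ≠ 0 := by
      have : (2:ℝ) ≤ n := by rw [hn_def]; exact_mod_cast (by omega : 2 ≤ k)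
      linarith
    have hE3 : eS (k-1) θ = Real.sin (n*θ) / n - Real.sin ((n-1)*θ) / (n-1) := by
      unfold eS; rw [if_neg (by omega), Nat.cast_sub hk, Nat.cast_one, hn_def]; ring_nf
    rw [hE3]
    linear_combination (norm := (field_simp; ring))
      (n/(n+1)^2) * h1 - (n/(n+1)) * h2 + ((1-n)/n^2) * h3 - ((1-n)/n) * h4
end

section
/- For every integer k ≥ 1 and every θ ∈ ℝ, setting f(θ) = e_{c,k}(θ) = (cos((k+1)θ) − 1)/(k+1) − (cos(kθ) − 1)/k and v(θ) = (1 − cos((k+1)θ))/(k+1)² − (1 − cos(kθ))/k², one has (f(θ) + v(θ))·cos θ − (f′(θ) + v′(θ))·sin θ = −d⁺_{k+1}·e_{c,k+1}(θ) − (d⁺_{k+1} − d⁺_k)·e_{c,k}(θ) + d⁺_k·e_{c,k−1}(θ) + ((k² − k − 1)/(k²(k+1)²))·e_{c,0}(θ), where d⁺_m = (m−1)²(m+1)/(2m²) and e_{c,0}(θ) = cos θ − 1. -/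
/-- The basis functions `e_{c,k}` of the weighted Sobolev space `ℋ`. -/
noncomputable def eC (k : ℕ) (θ : ℝ) : ℝ :=
  if k = 0 then Real.cos θ - 1
  else (Real.cos (((k : ℝ) + 1) * θ) - 1) / ((k : ℝ) + 1) - (Real.cos ((k : ℝ) * θ) - 1) / k

lemma key (n c s C S C1 S1 C2 Cm : ℝ) (hn : n ≠ 0) (h1 : n + 1 ≠ 0) (h2 : n + 2 ≠ 0)
    (hm : n - 1 ≠ 0)
    (p1 : C1 * c = (C2 + C) / 2) (p2 : S1 * s = (C - C2) / 2)
    (p3 : C * c = (C1 + Cm) / 2) (p4 : S * s = (Cm - C1) / 2) :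
    ((C1 - 1) / (n + 1) - (C - 1) / n + ((1 - C1) / (n + 1) ^ 2 - (1 - C) / n ^ 2)) * c
      - ((-S1 + S) + (S1 / (n + 1) - S / n)) * s
    = -((n + 1 - 1) ^ 2 * (n + 1 + 1) / (2 * (n + 1) ^ 2))
          * ((C2 - 1) / (n + 2) - (C1 - 1) / (n + 1))
      - ((n + 1 - 1) ^ 2 * (n + 1 + 1) / (2 * (n + 1) ^ 2)
            - (n - 1) ^ 2 * (n + 1) / (2 * n ^ 2))
          * ((C1 - 1) / (n + 1) - (C - 1) / n)
      + ((n - 1) ^ 2 * (n + 1) / (2 * n ^ 2)) * ((C - 1) / n - (Cm - 1) / (n - 1))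
      + ((n ^ 2 - n - 1) / (n ^ 2 * (n + 1) ^ 2)) * (c - 1) := by
  have step : ((C1 - 1) / (n + 1) - (C - 1) / n
        + ((1 - C1) / (n + 1) ^ 2 - (1 - C) / n ^ 2)) * c
      - ((-S1 + S) + (S1 / (n + 1) - S / n)) * s
      = (1 / (n + 1) - 1 / (n + 1) ^ 2) * (C1 * c) - (1 / n - 1 / n ^ 2) * (C * c)
        + ((1 / n - 1 / n ^ 2) - (1 / (n + 1) - 1 / (n + 1) ^ 2)) * c
        + (1 - 1 / (n + 1)) * (S1 * s) + (-1 + 1 / n) * (S * s) := by ring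
  rw [step, p1, p2, p3, p4]
  field_simp
  ring

lemma key1 (c s D T E : ℝ)
    (p1 : D * c = (E + c) / 2) (p2 : T * s = (c - E) / 2) :
    ((D - 1) / 2 - (c - 1) + ((1 - D) / 4 - (1 - c))) * c
      - ((-T + s) + (T / 2 - s)) * s
    = -(3 / 8 : ℝ) * ((E - 1) / 3 - (D - 1) / 2)
      - (3 / 8 - 0 : ℝ) * ((D - 1) / 2 - (c - 1))
      + (0 : ℝ) * (c - 1) + (-(1 / 4) : ℝ) * (c - 1) := by
  have step : ((D - 1) / 2 - (c - 1) + ((1 - D) / 4 - (1 - c))) * c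
      - ((-T + s) + (T / 2 - s)) * s
      = (1 / 4) * (D * c) - (1 / 4) * c + (1 / 2) * (T * s) := by ring
  rw [step, p1, p2]
  ring

/-- Action of the operator `L⁺ f = {f + v(f), sin θ}` on `f = e_{c,k}`,
with `v(θ) = (1 - cos((k+1)θ))/(k+1)² - (1 - cos(kθ))/k²` the primitive
vanishing at `0` of `H f`. -/
theorem Lplus_on_eC (k : ℕ) (hk : 1 ≤ k) (θ : ℝ)
    (f v : ℝ → ℝ)
    (hf : f = eC k)
    (hv : v = fun x => (1 - Real.cos (((k : ℝ) + 1) * x)) / ((k : ℝ) + 1) ^ 2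
        - (1 - Real.cos ((k : ℝ) * x)) / (k : ℝ) ^ 2) :
    (f θ + v θ) * Real.cos θ - (deriv f θ + deriv v θ) * Real.sin θ
      = -dPlus (k + 1) * eC (k + 1) θ - (dPlus (k + 1) - dPlus k) * eC k θ
        + dPlus k * eC (k - 1) θ
        + (((k : ℝ) ^ 2 - (k : ℝ) - 1) / ((k : ℝ) ^ 2 * ((k : ℝ) + 1) ^ 2)) * eC 0 θ := by
  subst hf hv
  have hk0 : k ≠ 0 := by omega
  have hn0 : (k : ℝ) ≠ 0 := Nat.cast_ne_zero.mpr hk0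
  have hkpos : (1 : ℝ) ≤ (k : ℝ) := by exact_mod_cast hk
  have hn1 : (k : ℝ) + 1 ≠ 0 := by positivity
  have hn2 : (k : ℝ) + 2 ≠ 0 := by positivity
  have hcs : ∀ a x : ℝ, HasDerivAt (fun y => Real.cos (a * y)) (-Real.sin (a * x) * a) x := by
    intro a x
    simpa [Function.comp_def] using (Real.hasDerivAt_cos (a * x)).comp x ((hasDerivAt_id x).const_mul a)
  have hfe : eC k = fun x => (Real.cos (((k : ℝ) + 1) * x) - 1) / ((k : ℝ) + 1)
      - (Real.cos ((k : ℝ) * x) - 1) / (k : ℝ) := by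
    funext x; simp [eC, hk0]
  have hdf : deriv (eC k) θ = -Real.sin (((k : ℝ) + 1) * θ) + Real.sin ((k : ℝ) * θ) := by
    rw [hfe]
    have H := (((hcs ((k : ℝ) + 1) θ).sub_const 1).div_const ((k : ℝ) + 1)).sub
      (((hcs (k : ℝ) θ).sub_const 1).div_const (k : ℝ))
    rw [show deriv (fun x => (Real.cos (((k : ℝ) + 1) * x) - 1) / ((k : ℝ) + 1)
      - (Real.cos ((k : ℝ) * x) - 1) / (k : ℝ)) θ = _ from H.deriv]
    field_simp
    ring
  have hdv : deriv (fun x => (1 - Real.cos (((k : ℝ) + 1) * x)) / ((k : ℝ) + 1) ^ 2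
        - (1 - Real.cos ((k : ℝ) * x)) / (k : ℝ) ^ 2) θ
      = Real.sin (((k : ℝ) + 1) * θ) / ((k : ℝ) + 1) - Real.sin ((k : ℝ) * θ) / (k : ℝ) := by
    have H := (((hcs ((k : ℝ) + 1) θ).const_sub 1).div_const (((k : ℝ) + 1) ^ 2)).sub
      (((hcs (k : ℝ) θ).const_sub 1).div_const ((k : ℝ) ^ 2))
    rw [show deriv (fun x => (1 - Real.cos (((k : ℝ) + 1) * x)) / ((k : ℝ) + 1) ^ 2
      - (1 - Real.cos ((k : ℝ) * x)) / (k : ℝ) ^ 2) θ = _ from H.deriv]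
    field_simp
  have e1 : eC (k + 1) θ = (Real.cos (((k : ℝ) + 1 + 1) * θ) - 1) / ((k : ℝ) + 1 + 1)
      - (Real.cos (((k : ℝ) + 1) * θ) - 1) / ((k : ℝ) + 1) := by
    simp [eC]
  have e0 : eC 0 θ = Real.cos θ - 1 := by simp [eC]
  have d1 : dPlus (k + 1) = ((k : ℝ) + 1 - 1) ^ 2 * ((k : ℝ) + 1 + 1) / (2 * ((k : ℝ) + 1) ^ 2) := by
    simp [dPlus]
  have d2 : dPlus k = ((k : ℝ) - 1) ^ 2 * ((k : ℝ) + 1) / (2 * (k : ℝ) ^ 2) := by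
    simp [dPlus]
  have p1 : Real.cos (((k : ℝ) + 1) * θ) * Real.cos θ
      = (Real.cos (((k : ℝ) + 1 + 1) * θ) + Real.cos ((k : ℝ) * θ)) / 2 := by
    have a1 := Real.cos_add (((k : ℝ) + 1) * θ) θ
    have a2 := Real.cos_sub (((k : ℝ) + 1) * θ) θ
    rw [show ((k : ℝ) + 1) * θ + θ = ((k : ℝ) + 1 + 1) * θ by ring] at a1
    rw [show ((k : ℝ) + 1) * θ - θ = (k : ℝ) * θ by ring] at a2
    linear_combination -(a1 + a2) / 2
  have p2 : Real.sin (((k : ℝ) + 1) * θ) * Real.sin θ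
      = (Real.cos ((k : ℝ) * θ) - Real.cos (((k : ℝ) + 1 + 1) * θ)) / 2 := by
    have a1 := Real.cos_add (((k : ℝ) + 1) * θ) θ
    have a2 := Real.cos_sub (((k : ℝ) + 1) * θ) θ
    rw [show ((k : ℝ) + 1) * θ + θ = ((k : ℝ) + 1 + 1) * θ by ring] at a1
    rw [show ((k : ℝ) + 1) * θ - θ = (k : ℝ) * θ by ring] at a2
    linear_combination (a1 - a2) / 2
  rcases eq_or_lt_of_le hk with h1 | h2
  · -- k = 1
    subst h1
    have em : eC (1 - 1) θ = Real.cos θ - 1 := by simp [eC]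
    rw [hdf, hdv, hfe, e1, em, d1, d2]
    norm_num at p1 p2 ⊢
    linear_combination key1 (Real.cos θ) (Real.sin θ) (Real.cos (2 * θ)) (Real.sin (2 * θ))
      (Real.cos (3 * θ)) p1 p2
  · -- 2 ≤ k
    have hk2 : 2 ≤ k := h2
    have hm : (k : ℝ) - 1 ≠ 0 := by
      have : (2 : ℝ) ≤ (k : ℝ) := by exact_mod_cast hk2
      linarith
    have em : eC (k - 1) θ = (Real.cos ((k : ℝ) * θ) - 1) / (k : ℝ)
        - (Real.cos (((k : ℝ) - 1) * θ) - 1) / ((k : ℝ) - 1) := by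
      have h0 : k - 1 ≠ 0 := by omega
      simp only [eC, if_neg h0]
      rw [Nat.cast_sub hk, Nat.cast_one]
      rw [show ((k : ℝ) - 1 + 1) = (k : ℝ) by ring]
    have p3 : Real.cos ((k : ℝ) * θ) * Real.cos θ
        = (Real.cos (((k : ℝ) + 1) * θ) + Real.cos (((k : ℝ) - 1) * θ)) / 2 := by
      have a1 := Real.cos_add ((k : ℝ) * θ) θ
      have a2 := Real.cos_sub ((k : ℝ) * θ) θ
      rw [show (k : ℝ) * θ + θ = ((k : ℝ) + 1) * θ by ring] at a1
      rw [show (k : ℝ) * θ - θ = ((k : ℝ) - 1) * θ by ring] at a2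
      linear_combination -(a1 + a2) / 2
    have p4 : Real.sin ((k : ℝ) * θ) * Real.sin θ
        = (Real.cos (((k : ℝ) - 1) * θ) - Real.cos (((k : ℝ) + 1) * θ)) / 2 := by
      have a1 := Real.cos_add ((k : ℝ) * θ) θ
      have a2 := Real.cos_sub ((k : ℝ) * θ) θ
      rw [show (k : ℝ) * θ + θ = ((k : ℝ) + 1) * θ by ring] at a1
      rw [show (k : ℝ) * θ - θ = ((k : ℝ) - 1) * θ by ring] at a2
      linear_combination (a1 - a2) / 2
    rw [hdf, hdv, hfe, e1, em, e0, d1, d2]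
    linear_combination key (k : ℝ) (Real.cos θ) (Real.sin θ) (Real.cos ((k : ℝ) * θ))
      (Real.sin ((k : ℝ) * θ)) (Real.cos (((k : ℝ) + 1) * θ)) (Real.sin (((k : ℝ) + 1) * θ))
      (Real.cos (((k : ℝ) + 1 + 1) * θ)) (Real.cos (((k : ℝ) - 1) * θ))
      hn0 hn1 hn2 hm p1 p2 p3 p4
end

section
/- Let d⁺_m = (m−1)²(m+1)/(2m²) for integers m ≥ 1. Let x : ℕ → ℝ (indexed by k ≥ 0, with x_0 an arbitrary real) satisfy ∑_{k≥1} k·x_k² < ∞. Then all series below converge absolutely and ∑_{k≥1} x_k·(d⁺_{k+1}·x_{k+1} − (d⁺_{k+1} − d⁺_k)·x_k − d⁺_k·x_{k−1}) ≤ −(3/8)·∑_{k≥1} x_k². -/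
lemma dPlus_one : dPlus 1 = 0 := by norm_num [dPlus]

lemma dPlus_nonneg (m : ℕ) : 0 ≤ dPlus m := by unfold dPlus; positivity

lemma dPlus_le (m : ℕ) : dPlus m ≤ (m : ℝ) / 2 := by
  unfold dPlus
  rcases Nat.eq_zero_or_pos m with h | h
  · subst h; norm_num
  · have hm : (1:ℝ) ≤ (m:ℝ) := by exact_mod_cast h
    rw [div_le_div_iff₀ (by positivity) (by norm_num)]
    nlinarith

lemma dPlus_gap (k : ℕ) : 3/8 ≤ dPlus (k+2) - dPlus (k+1) := by
  unfold dPlus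
  have hk : (0:ℝ) ≤ (k:ℝ) := Nat.cast_nonneg k
  push_cast
  rw [le_sub_iff_add_le, div_add_div _ _ (by positivity) (by positivity),
    div_le_div_iff₀ (by positivity) (by positivity)]
  nlinarith [sq_nonneg ((k:ℝ)), sq_nonneg ((k:ℝ)+1), sq_nonneg ((k:ℝ)^2+(k:ℝ)),
    mul_nonneg hk (sq_nonneg ((k:ℝ)+1)), mul_nonneg (mul_nonneg hk hk) hk]

/-- Coordinate form of the linear stability estimate
`⟨η, L⁺η⟩_{ℋ₀} ≤ -(3/8)⟦η⟧²_{ℋ₀}`: for any sequence `x` with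
`∑_{k≥1} k·x_k² < ∞`, the series
`∑_{k≥1} x_k (d⁺_{k+1} x_{k+1} - (d⁺_{k+1}-d⁺_k) x_k - d⁺_k x_{k-1})`
converges absolutely and is at most `-(3/8) ∑_{k≥1} x_k²`. -/
theorem Lplus_quadratic_form_bound (x : ℕ → ℝ)
    (hx : Summable fun k : ℕ => (k : ℝ) * x k ^ 2) :
    Summable (fun k : ℕ =>
      |x (k + 1) * (dPlus (k + 2) * x (k + 2)
        - (dPlus (k + 2) - dPlus (k + 1)) * x (k + 1) - dPlus (k + 1) * x k)|)
    ∧ Summable (fun k : ℕ => x (k + 1) ^ 2)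
    ∧ (∑' k : ℕ, x (k + 1) * (dPlus (k + 2) * x (k + 2)
          - (dPlus (k + 2) - dPlus (k + 1)) * x (k + 1) - dPlus (k + 1) * x k))
        ≤ -(3 / 8) * ∑' k : ℕ, x (k + 1) ^ 2 := by
  -- summability of various weighted square series
  have hx1 : Summable (fun k : ℕ => ((k:ℝ)+1) * x (k+1)^2) := by
    have h := (summable_nat_add_iff 1).mpr hx
    simpa using h
  have hsq : Summable (fun k : ℕ => x (k+1)^2) := by
    refine Summable.of_nonneg_of_le (fun k => sq_nonneg _) (fun k => ?_) hx1
    nlinarith [sq_nonneg (x (k+1)), (Nat.cast_nonneg k : (0:ℝ) ≤ (k:ℝ))]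
  have hsq0 : Summable (fun k : ℕ => x k ^ 2) := (summable_nat_add_iff 1).mp hsq
  have hkx : Summable (fun k : ℕ => ((k:ℝ)+1) * x k ^ 2) := by
    have h := hx.add hsq0
    exact h.congr (fun k => by ring)
  have hkx1 : Summable (fun k : ℕ => ((k:ℝ)+2) * x (k+1) ^ 2) := by
    have h := (summable_nat_add_iff 1).mpr hkx
    exact h.congr (fun k => by push_cast; ring)
  -- the telescoping part
  set T : ℕ → ℝ := fun k => dPlus (k+1) * x k * x (k+1) with hTdef
  have habs : ∀ k : ℕ, |x k * x (k+1)| ≤ (x k ^ 2 + x (k+1) ^ 2) / 2 := by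
    intro k
    rw [abs_mul]
    nlinarith [sq_abs (x k), sq_abs (x (k+1)), sq_nonneg (|x k| - |x (k+1)|)]
  have hT : Summable T := by
    apply Summable.of_abs
    refine Summable.of_nonneg_of_le (fun k => abs_nonneg _) (fun k => ?_) (hkx.add hkx1)
    have h1 : |T k| = dPlus (k+1) * |x k * x (k+1)| := by
      rw [hTdef]
      simp only [mul_assoc, abs_mul, abs_of_nonneg (dPlus_nonneg (k+1))]
    rw [h1]
    have h2 := dPlus_le (k+1)
    have h3 := dPlus_nonneg (k+1)
    have h4 := habs k
    have h5 : ((k:ℝ)+1)/2 * |x k * x (k+1)| ≤ ((k:ℝ)+1)/2 * ((x k ^ 2 + x (k+1) ^ 2) / 2) := by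
      apply mul_le_mul_of_nonneg_left h4; positivity
    have h6 : dPlus (k+1) * |x k * x (k+1)| ≤ ((k:ℝ)+1)/2 * |x k * x (k+1)| := by
      apply mul_le_mul_of_nonneg_right _ (abs_nonneg _)
      calc dPlus (k+1) ≤ ((k+1:ℕ):ℝ)/2 := h2
        _ = ((k:ℝ)+1)/2 := by push_cast; ring
    calc dPlus (k+1) * |x k * x (k+1)| ≤ ((k:ℝ)+1)/2 * ((x k ^ 2 + x (k+1) ^ 2) / 2) :=
          le_trans h6 h5
      _ ≤ ((k:ℝ)+1) * x k ^ 2 + ((k:ℝ)+2) * x (k+1) ^ 2 := by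
          nlinarith [sq_nonneg (x k), sq_nonneg (x (k+1)), (Nat.cast_nonneg k : (0:ℝ) ≤ (k:ℝ))]
  have hT' : Summable (fun k => T (k+1)) := (summable_nat_add_iff 1).mpr hT
  -- the diagonal part
  set c : ℕ → ℝ := fun k => dPlus (k+2) - dPlus (k+1) with hcdef
  have hcnn : ∀ k, (3:ℝ)/8 ≤ c k := fun k => dPlus_gap k
  have hcub : ∀ k, c k ≤ (k:ℝ)+2 := by
    intro k
    have h1 := dPlus_le (k+2)
    have h2 := dPlus_nonneg (k+1)
    have : ((k+2:ℕ):ℝ)/2 ≤ (k:ℝ)+2 := by push_cast; nlinarith [(Nat.cast_nonneg k : (0:ℝ) ≤ (k:ℝ))]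
    simp only [hcdef]; linarith
  have hc : Summable (fun k => c k * x (k+1)^2) := by
    refine Summable.of_nonneg_of_le (fun k => ?_) (fun k => ?_) hkx1
    · exact mul_nonneg (le_trans (by norm_num) (hcnn k)) (sq_nonneg _)
    · exact mul_le_mul_of_nonneg_right (hcub k) (sq_nonneg _)
  -- decompose the summand
  have hfeq : ∀ k : ℕ, x (k + 1) * (dPlus (k + 2) * x (k + 2)
        - (dPlus (k + 2) - dPlus (k + 1)) * x (k + 1) - dPlus (k + 1) * x k)
      = T (k+1) - T k - c k * x (k+1)^2 := by
    intro k
    simp only [hTdef, hcdef]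
    ring
  have hf : Summable (fun k : ℕ => x (k + 1) * (dPlus (k + 2) * x (k + 2)
        - (dPlus (k + 2) - dPlus (k + 1)) * x (k + 1) - dPlus (k + 1) * x k)) := by
    exact ((hT'.sub hT).sub hc).congr (fun k => (hfeq k).symm)
  refine ⟨hf.abs, hsq, ?_⟩
  -- evaluate the telescoping sum
  have hT0 : T 0 = 0 := by simp [hTdef, dPlus_one]
  have htel : ∑' k, (T (k+1) - T k) = 0 := by
    rw [Summable.tsum_sub hT' hT]
    have h0 := Summable.tsum_eq_zero_add hT
    rw [hT0] at h0
    linarith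
  have hsum_eq : (∑' k : ℕ, x (k + 1) * (dPlus (k + 2) * x (k + 2)
          - (dPlus (k + 2) - dPlus (k + 1)) * x (k + 1) - dPlus (k + 1) * x k))
      = - ∑' k, c k * x (k+1)^2 := by
    rw [tsum_congr hfeq, Summable.tsum_sub (hT'.sub hT) hc, htel]
    ring
  rw [hsum_eq]
  have hle : (3/8 : ℝ) * ∑' k, x (k+1)^2 ≤ ∑' k, c k * x (k+1)^2 := by
    rw [← tsum_mul_left]
    refine Summable.tsum_le_tsum (fun k => ?_) (hsq.mul_left _) hc
    exact mul_le_mul_of_nonneg_right (hcnn k) (sq_nonneg _)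
  linarith
end

section
/- For every integer k ≥ 2 and every θ ∈ ℝ, cos θ · e_{s,k}(θ) + sin θ · (cos(kθ)/k − cos((k+1)θ)/(k+1)) = (k/(k+1))·e_{s,k−1}(θ) + (1/(k(k+1)))·∑_{j=1}^{k−2} e_{s,j}(θ) + (1/(k(k+1)))·sin θ, where e_{s,0}(θ) = sin θ, e_{s,j}(θ) = sin((j+1)θ)/(j+1) − sin(jθ)/j for j ≥ 1, and the sum is empty when k = 2. -/
lemma sum_eS (m : ℕ) (θ : ℝ) :
    ∑ j ∈ Finset.Icc 1 m, eS j θ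
      = Real.sin (((m : ℝ) + 1) * θ) / ((m : ℝ) + 1) - Real.sin θ := by
  induction m with
  | zero => simp
  | succ n ih =>
      rw [Finset.sum_Icc_succ_top (by omega), ih, eS]
      simp only [Nat.succ_ne_zero, if_false]
      push_cast
      ring

/-- Action of the operator `Q f = cos θ · f + sin θ · H f` on the basis
function `e_{s,k}` for `k ≥ 2`, where
`H e_{s,k}(θ) = cos(kθ)/k - cos((k+1)θ)/(k+1)` is given explicitly. -/
theorem Q_on_eS (k : ℕ) (hk : 2 ≤ k) (θ : ℝ) :
    Real.cos θ * eS k θ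
        + Real.sin θ * (Real.cos ((k : ℝ) * θ) / k
          - Real.cos (((k : ℝ) + 1) * θ) / ((k : ℝ) + 1))
      = ((k : ℝ) / ((k : ℝ) + 1)) * eS (k - 1) θ
        + (1 / ((k : ℝ) * ((k : ℝ) + 1))) * ∑ j ∈ Finset.Icc 1 (k - 2), eS j θ
        + (1 / ((k : ℝ) * ((k : ℝ) + 1))) * Real.sin θ := by
  obtain ⟨m, rfl⟩ : ∃ m, k = m + 2 := ⟨k - 2, by omega⟩
  have h2 : m + 2 - 1 = m + 1 := by omega
  have h3 : m + 2 - 2 = m := by omega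
  rw [h2, h3, sum_eS, eS, eS]
  simp only [Nat.succ_ne_zero, Nat.add_eq_zero, and_false, if_false]
  push_cast
  have e1 : ((m : ℝ) + 2 + 1) * θ = ((m : ℝ) + 2) * θ + θ := by ring
  have e2 : ((m : ℝ) + 1 + 1) * θ = ((m : ℝ) + 2) * θ := by ring
  have e3 : ((m : ℝ) + 1) * θ = ((m : ℝ) + 2) * θ - θ := by ring
  rw [e1, e2, e3, Real.sin_add, Real.cos_add, Real.sin_sub]
  have hm1 : (m : ℝ) + 1 ≠ 0 := by positivity
  have hm2 : (m : ℝ) + 2 ≠ 0 := by positivity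
  have hm3 : (m : ℝ) + 3 ≠ 0 := by positivity
  ring_nf
  rw [Real.cos_sq']
  field_simp
  ring
end

section
/- For every integer k ≥ 2 and every θ ∈ ℝ, cos θ · e_{c,k}(θ) + sin θ · (sin((k+1)θ)/(k+1) − sin(kθ)/k) = (k/(k+1))·e_{c,k−1}(θ) + (1/(k(k+1)))·∑_{j=1}^{k−2} e_{c,j}(θ) + (2/(k(k+1)))·e_{c,0}(θ), where e_{c,0}(θ) = cos θ − 1, e_{c,j}(θ) = (cos((j+1)θ) − 1)/(j+1) − (cos(jθ) − 1)/j for j ≥ 1, and the sum is empty when k = 2. -/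
/-- Telescoping sum of the basis functions `e_{c,j}` for `1 ≤ j ≤ m`. -/
lemma eC_tele (m : ℕ) (θ : ℝ) :
    ∑ j ∈ Finset.Icc 1 m, eC j θ
      = (Real.cos (((m : ℝ) + 1) * θ) - 1) / ((m : ℝ) + 1) - (Real.cos θ - 1) := by
  induction m with
  | zero => simp
  | succ n ih =>
    rw [Finset.sum_Icc_succ_top (by omega), ih]
    simp only [eC, Nat.succ_ne_zero, if_false]
    push_cast
    ring_nf

/-- Action of the operator `Q f = cos θ · f + sin θ · H f` on the basis
function `e_{c,k}` for `k ≥ 2`, where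
`H e_{c,k}(θ) = sin((k+1)θ)/(k+1) - sin(kθ)/k` is given explicitly. -/
theorem Q_on_eC (k : ℕ) (hk : 2 ≤ k) (θ : ℝ) :
    Real.cos θ * eC k θ
        + Real.sin θ * (Real.sin (((k : ℝ) + 1) * θ) / ((k : ℝ) + 1)
          - Real.sin ((k : ℝ) * θ) / k)
      = ((k : ℝ) / ((k : ℝ) + 1)) * eC (k - 1) θ
        + (1 / ((k : ℝ) * ((k : ℝ) + 1))) * ∑ j ∈ Finset.Icc 1 (k - 2), eC j θ
        + (2 / ((k : ℝ) * ((k : ℝ) + 1))) * eC 0 θ := by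
  have hk0 : k ≠ 0 := by omega
  have hk1 : k - 1 ≠ 0 := by omega
  have hc1 : ((k - 1 : ℕ) : ℝ) = (k : ℝ) - 1 := by
    have h1 : (1:ℕ) ≤ k := by omega
    push_cast [h1]; ring
  have hc2 : ((k - 2 : ℕ) : ℝ) = (k : ℝ) - 2 := by push_cast [hk]; ring
  rw [eC_tele]
  simp only [eC, hk0, hk1, if_false, if_true, hc1, hc2, if_pos rfl]
  have hn : (2:ℝ) ≤ (k : ℝ) := by exact_mod_cast hk
  have h0 : (k : ℝ) ≠ 0 := by linarith
  have h1 : (k : ℝ) + 1 ≠ 0 := by linarith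
  have h2 : (k : ℝ) - 1 ≠ 0 := by linarith
  have e1 : ((k:ℝ) - 1 + 1) = (k:ℝ) := by ring
  have e2 : ((k:ℝ) - 2 + 1) = (k:ℝ) - 1 := by ring
  rw [e1, e2]
  have ha : ((k:ℝ) + 1) * θ = (k:ℝ) * θ + θ := by ring
  have hb : ((k:ℝ) - 1) * θ = (k:ℝ) * θ - θ := by ring
  rw [ha, hb, Real.cos_add, Real.sin_add, Real.cos_sub]
  have hp := Real.sin_sq_add_cos_sq θ
  field_simp
  linear_combination (Real.cos ((k:ℝ)*θ)) * ((k:ℝ)^2 - (k:ℝ)) * hp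
end

section
/- Let x : {1, 2, 3, …} → ℝ be square-summable, and for each integer j ≥ 1 define y_j = ((j+1)/(j+2))·x_{j+1} + ∑_{k≥j+2} x_k/(k(k+1)) (the series converging absolutely). Then ∑_{j≥1} y_j² ≤ ∑_{k≥1} x_k². -/
open Filter

-- telescoping sum
lemma tele_hasSum (c : ℝ) (hc : 0 < c) :
    HasSum (fun m : ℕ => 1 / (((m : ℝ) + c) * ((m : ℝ) + c + 1))) (1 / c) := by
  have hnn : ∀ m : ℕ, 0 ≤ 1 / (((m : ℝ) + c) * ((m : ℝ) + c + 1)) := by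
    intro m; positivity
  rw [hasSum_iff_tendsto_nat_of_nonneg hnn]
  have key : ∀ n : ℕ, ∑ m ∈ Finset.range n, 1 / (((m : ℝ) + c) * ((m : ℝ) + c + 1))
      = 1 / c - 1 / ((n : ℝ) + c) := by
    intro n
    induction n with
    | zero => simp
    | succ n ih =>
      rw [Finset.sum_range_succ, ih]
      have h1 : (n : ℝ) + c ≠ 0 := by positivity
      have h2 : (n : ℝ) + c + 1 ≠ 0 := by positivity
      push_cast
      field_simp
      ring
  simp only [key]
  have h1 : Tendsto (fun n : ℕ => 1 / ((n : ℝ) + c)) atTop (nhds 0) := by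
    simp only [one_div]
    exact Tendsto.inv_tendsto_atTop
      (tendsto_atTop_add_const_right _ c tendsto_natCast_atTop_atTop)
  simpa using (tendsto_const_nhds.sub h1)

lemma abs_mul_summable {a b : ℕ → ℝ} (ha : Summable fun n => a n ^ 2)
    (hb : Summable fun n => b n ^ 2) : Summable fun n => |a n * b n| := by
  apply Summable.of_nonneg_of_le (fun n => abs_nonneg _) (fun n => ?_)
    ((ha.add hb).div_const 2)
  rw [abs_mul]
  nlinarith [sq_nonneg (|a n| - |b n|), sq_abs (a n), sq_abs (b n), abs_nonneg (a n), abs_nonneg (b n)]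

lemma jensen {a z : ℕ → ℝ} (hnn : ∀ k, 0 ≤ a k) (h1 : HasSum a 1)
    (h2 : Summable fun k => a k * z k ^ 2) (h3 : Summable fun k => a k * z k) :
    (∑' k, a k * z k) ^ 2 ≤ ∑' k, a k * z k ^ 2 := by
  set m := ∑' k, a k * z k with hm
  have hG : Summable fun k => 2 * m * (a k * z k) := h3.mul_left _
  have hH : Summable fun k => m ^ 2 * a k := h1.summable.mul_left _
  have hsub : Summable fun k => a k * z k ^ 2 - 2 * m * (a k * z k) := h2.sub hG
  have hs : Summable fun k => a k * (z k - m) ^ 2 := by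
    refine ((hsub).add hH).congr fun k => by ring
  have h0 : 0 ≤ ∑' k, a k * (z k - m) ^ 2 :=
    tsum_nonneg fun k => mul_nonneg (hnn k) (sq_nonneg _)
  have e : ∑' k, a k * (z k - m) ^ 2
      = (∑' k, a k * z k ^ 2) - 2 * m * m + m ^ 2 * 1 := by
    have e1 : ∑' k, a k * (z k - m) ^ 2
        = ∑' k, (a k * z k ^ 2 - 2 * m * (a k * z k) + m ^ 2 * a k) :=
      tsum_congr fun k => by ring
    rw [e1, Summable.tsum_add hsub hH, Summable.tsum_sub h2 hG, tsum_mul_left, tsum_mul_left, h1.tsum_eq, ← hm]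
  nlinarith [h0, e]

noncomputable def Amat (j k : ℕ) : ℝ :=
  if k = j + 1 then ((j : ℝ) + 2) / ((j : ℝ) + 3)
  else if j + 2 ≤ k then 1 / (((k : ℝ) + 1) * ((k : ℝ) + 2)) else 0

lemma Amat_nonneg (j k : ℕ) : 0 ≤ Amat j k := by
  unfold Amat
  split_ifs <;> positivity

lemma Amat_le_one (j k : ℕ) : Amat j k ≤ 1 := by
  unfold Amat
  split_ifs with h1 h2
  · rw [div_le_one (by positivity)]; linarith
  · rw [div_le_one (by positivity)]; nlinarith [Nat.cast_nonneg (α := ℝ) k]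
  · norm_num

lemma Amat_tail (j m : ℕ) :
    Amat j (m + (j + 2)) = 1 / (((m : ℝ) + ((j : ℝ) + 3)) * ((m : ℝ) + ((j : ℝ) + 3) + 1)) := by
  unfold Amat
  rw [if_neg (by omega), if_pos (by omega)]
  push_cast
  ring_nf

lemma Amat_zero_of_le (j k : ℕ) (h : k ≤ j) : Amat j k = 0 := by
  unfold Amat
  rw [if_neg (by omega), if_neg (by omega)]

lemma Amat_row_hasSum (j : ℕ) : HasSum (Amat j) 1 := by
  have htail := tele_hasSum ((j : ℝ) + 3) (by positivity)
  have htail' : HasSum (fun m : ℕ => Amat j (m + (j + 2))) (1 / ((j : ℝ) + 3)) := by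
    simpa only [Amat_tail] using htail
  have := (hasSum_nat_add_iff (j + 2)).1 htail'
  have hfin : ∑ i ∈ Finset.range (j + 2), Amat j i = ((j : ℝ) + 2) / ((j : ℝ) + 3) := by
    rw [Finset.sum_eq_single (j + 1)]
    · unfold Amat; rw [if_pos rfl]
    · intro i hi hne
      exact Amat_zero_of_le j i (by have := Finset.mem_range.1 hi; omega)
    · intro h; exact absurd (Finset.mem_range.2 (by omega)) h
  rw [hfin] at this
  have : HasSum (Amat j) (1 / ((j : ℝ) + 3) + ((j : ℝ) + 2) / ((j : ℝ) + 3)) := this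
  convert this using 1
  have h3 : ((j : ℝ) + 3) ≠ 0 := by positivity
  field_simp
  ring

lemma colsum_le (k : ℕ) : ∑ j ∈ Finset.range k, Amat j k ≤ 1 := by
  cases k with
  | zero => simp
  | succ n =>
    rw [Finset.sum_range_succ]
    have h1 : ∀ j ∈ Finset.range n, Amat j (n + 1) = 1 / (((n : ℝ) + 2) * ((n : ℝ) + 3)) := by
      intro j hj
      have hj' := Finset.mem_range.1 hj
      unfold Amat
      rw [if_neg (by omega), if_pos (by omega)]
      push_cast; ring_nf
    rw [Finset.sum_congr rfl h1, Finset.sum_const, Finset.card_range]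
    have h2 : Amat n (n + 1) = ((n : ℝ) + 2) / ((n : ℝ) + 3) := by
      unfold Amat; rw [if_pos rfl]
    rw [h2]
    have hn2 : (0:ℝ) < (n : ℝ) + 2 := by positivity
    have hn3 : (0:ℝ) < (n : ℝ) + 3 := by positivity
    rw [nsmul_eq_mul, mul_one_div, div_add_div _ _ (by positivity) (by positivity),
      div_le_one (by positivity)]
    nlinarith [Nat.cast_nonneg (α := ℝ) n]

/-- Coordinate form of the operator-norm bound `⟦Qη⟧_{ℋ₀} ≤ ⟦η⟧_{ℋ₀}`:
if `(x_k)_{k≥1}` is square-summable and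
`y_j = ((j+1)/(j+2)) x_{j+1} + ∑_{k≥j+2} x_k/(k(k+1))` for `j ≥ 1`,
then the defining series converge absolutely, `(y_j)_{j≥1}` is
square-summable, and `∑_{j≥1} y_j² ≤ ∑_{k≥1} x_k²`. -/
theorem Q_matrix_norm_bound (x y : ℕ → ℝ)
    (hx : Summable fun k : ℕ => x (k + 1) ^ 2)
    (hy : ∀ j : ℕ, 1 ≤ j →
      y j = (((j : ℝ) + 1) / ((j : ℝ) + 2)) * x (j + 1)
        + ∑' k : ℕ, x (k + j + 2) / (((k : ℝ) + j + 2) * ((k : ℝ) + j + 3))) :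
    (∀ j : ℕ, 1 ≤ j →
      Summable fun k : ℕ => |x (k + j + 2) / (((k : ℝ) + j + 2) * ((k : ℝ) + j + 3))|)
    ∧ Summable (fun j : ℕ => y (j + 1) ^ 2)
    ∧ ∑' j : ℕ, y (j + 1) ^ 2 ≤ ∑' k : ℕ, x (k + 1) ^ 2 := by
  -- shifted square-summability of x
  have hx2 : ∀ n : ℕ, Summable fun k : ℕ => x (k + n + 1) ^ 2 := fun n =>
    (summable_nat_add_iff (f := fun k => x (k + 1) ^ 2) n).2 hx
  -- square-summability of the kernel coefficients
  have hb2 : ∀ d : ℝ, 1 ≤ d →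
      Summable fun k : ℕ => (1 / (((k : ℝ) + d) * ((k : ℝ) + d + 1))) ^ 2 := by
    intro d hd
    refine Summable.of_nonneg_of_le (fun k => sq_nonneg _) (fun k => ?_)
      (tele_hasSum d (by linarith)).summable
    have h1 : 0 ≤ 1 / (((k : ℝ) + d) * ((k : ℝ) + d + 1)) := by positivity
    have h2 : 1 / (((k : ℝ) + d) * ((k : ℝ) + d + 1)) ≤ 1 := by
      rw [div_le_one (by positivity)]
      nlinarith [Nat.cast_nonneg (α := ℝ) k]
    nlinarith
  -- first claim
  have habs : ∀ j : ℕ, 1 ≤ j →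
      Summable fun k : ℕ => |x (k + j + 2) / (((k : ℝ) + j + 2) * ((k : ℝ) + j + 3))| := by
    intro j _
    have ha : Summable fun k : ℕ => x (k + j + 2) ^ 2 := by
      refine (hx2 (j + 1)).congr fun k => ?_
      rw [show k + (j + 1) + 1 = k + j + 2 from by omega]
    have hb : Summable fun k : ℕ => (1 / (((k : ℝ) + j + 2) * ((k : ℝ) + j + 3))) ^ 2 := by
      refine (hb2 ((j : ℝ) + 2) (by have := Nat.cast_nonneg (α := ℝ) j; linarith)).congr fun k => ?_
      ring_nf
    refine (abs_mul_summable ha hb).congr fun k => ?_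
    rw [mul_one_div]
  -- row summability against x²
  have hrow2 : ∀ j : ℕ, Summable fun k : ℕ => Amat j k * x (k + 1) ^ 2 := by
    intro j
    refine Summable.of_nonneg_of_le
      (fun k => mul_nonneg (Amat_nonneg j k) (sq_nonneg _)) (fun k => ?_) hx
    exact mul_le_of_le_one_left (sq_nonneg _) (Amat_le_one j k)
  -- row summability against x
  have hrow1 : ∀ j : ℕ, Summable fun k : ℕ => Amat j k * x (k + 1) := by
    intro j
    rw [← summable_nat_add_iff (j + 2)]
    have ha : Summable fun m : ℕ => x (m + (j + 2) + 1) ^ 2 := hx2 (j + 2)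
    have hb : Summable fun m : ℕ => (Amat j (m + (j + 2))) ^ 2 := by
      refine (hb2 ((j : ℝ) + 3) (by have := Nat.cast_nonneg (α := ℝ) j; linarith)).congr fun m => ?_
      rw [Amat_tail]
    refine Summable.of_abs ?_
    refine (abs_mul_summable hb ha).congr fun m => rfl
  -- identification of y with the matrix action
  have ysum : ∀ j : ℕ, y (j + 1) = ∑' k, Amat j k * x (k + 1) := by
    intro j
    rw [hy (j + 1) (by omega), ← Summable.sum_add_tsum_nat_add (j + 2) (hrow1 j)]
    have hfin : ∑ i ∈ Finset.range (j + 2), Amat j i * x (i + 1)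
        = ((((j + 1 : ℕ) : ℝ)) + 1) / ((((j + 1 : ℕ) : ℝ)) + 2) * x (j + 1 + 1) := by
      rw [Finset.sum_eq_single (j + 1)]
      · unfold Amat; rw [if_pos rfl]
        push_cast; ring_nf
      · intro i hi hne
        rw [Amat_zero_of_le j i (by have := Finset.mem_range.1 hi; omega), zero_mul]
      · intro h; exact absurd (Finset.mem_range.2 (by omega)) h
    rw [hfin]
    have ht : (∑' m : ℕ, Amat j (m + (j + 2)) * x (m + (j + 2) + 1))
        = ∑' k : ℕ, x (k + (j + 1) + 2)
            / (((k : ℝ) + ((j + 1 : ℕ) : ℝ) + 2) * ((k : ℝ) + ((j + 1 : ℕ) : ℝ) + 3)) := by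
      refine tsum_congr fun m => ?_
      rw [Amat_tail, show m + (j + 2) + 1 = m + (j + 1) + 2 from by omega]
      push_cast
      ring
    rw [ht]
  -- per-row Jensen bound
  have hyle : ∀ j : ℕ, y (j + 1) ^ 2 ≤ ∑' k, Amat j k * x (k + 1) ^ 2 := by
    intro j
    rw [ysum j]
    exact jensen (Amat_nonneg j) (Amat_row_hasSum j) (hrow2 j) (hrow1 j)
  -- column summability
  have hcolS : ∀ k : ℕ, Summable fun j : ℕ => Amat j k * x (k + 1) ^ 2 := by
    intro k
    refine summable_of_ne_finset_zero (s := Finset.range k) fun j hj => ?_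
    have hkj : k ≤ j := by simp only [Finset.mem_range, not_lt] at hj; omega
    rw [Amat_zero_of_le j k hkj, zero_mul]
  -- column sums bounded by 1
  have hcolsum : ∀ k : ℕ, ∑' j, Amat j k * x (k + 1) ^ 2 ≤ x (k + 1) ^ 2 := by
    intro k
    rw [tsum_eq_sum (s := Finset.range k) (fun j hj => by
      have hkj : k ≤ j := by simp only [Finset.mem_range, not_lt] at hj; omega
      rw [Amat_zero_of_le j k hkj, zero_mul])]
    rw [← Finset.sum_mul]
    exact mul_le_of_le_one_left (sq_nonneg _) (colsum_le k)
  -- product summability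
  have hFnn : ∀ p : ℕ × ℕ, 0 ≤ Amat p.2 p.1 * x (p.1 + 1) ^ 2 :=
    fun p => mul_nonneg (Amat_nonneg _ _) (sq_nonneg _)
  have hFs : Summable fun p : ℕ × ℕ => Amat p.2 p.1 * x (p.1 + 1) ^ 2 := by
    refine (summable_prod_of_nonneg hFnn).2 ⟨fun k => hcolS k, ?_⟩
    refine Summable.of_nonneg_of_le
      (fun k => tsum_nonneg fun j => mul_nonneg (Amat_nonneg _ _) (sq_nonneg _))
      (fun k => hcolsum k) hx
  have hg : Summable fun j : ℕ => ∑' k, Amat j k * x (k + 1) ^ 2 := hFs.prod_symm.prod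
  -- summability of y²
  have hy2s : Summable fun j : ℕ => y (j + 1) ^ 2 :=
    Summable.of_nonneg_of_le (fun j => sq_nonneg _) hyle hg
  refine ⟨habs, hy2s, ?_⟩
  calc ∑' j, y (j + 1) ^ 2 ≤ ∑' j, ∑' k, Amat j k * x (k + 1) ^ 2 :=
        Summable.tsum_le_tsum hyle hy2s hg
    _ = ∑' k, ∑' j, Amat j k * x (k + 1) ^ 2 :=
        Summable.tsum_comm hFs
    _ ≤ ∑' k, x (k + 1) ^ 2 := Summable.tsum_le_tsum hcolsum hFs.prod hx
end

section
/- There is a constant C > 0 (one may take C = (π³/12)^{1/2}) such that for every continuously differentiable 2π-periodic function f : ℝ → ℝ with f(0) = 0 and A² := ∫_{−π}^{π} f′(ϑ)²/sin(ϑ/2)² dϑ < ∞, the function ϑ ↦ cot(ϑ/2)·f(ϑ) extends to an (absolutely) integrable function on (−π, π) and |(1/2π)·∫_{−π}^{π} cot(ϑ/2)·f(ϑ) dϑ| ≤ C·A. -/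
open MeasureTheory


open Real Set in
/-- Cauchy–Schwarz on a subinterval: `∫ |φ| ≤ √(∫ φ²/sin²) · √((b³-a³)/12)`. -/
private lemma key_cs {φ : ℝ → ℝ} (hφ : Continuous φ)
    (hB : IntegrableOn (fun t => φ t ^ 2 / Real.sin (t / 2) ^ 2) (Set.Ioo (-π) π))
    {a b : ℝ} (hab : a ≤ b) (hsub : Set.Ioc a b ⊆ Set.Ioo (-π) π) :
    ∫ t in Set.Ioc a b, |φ t| ≤
      Real.sqrt (∫ t in Set.Ioo (-π) π, φ t ^ 2 / Real.sin (t / 2) ^ 2) *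
        Real.sqrt ((b ^ 3 - a ^ 3) / 12) := by
  set B := ∫ t in Set.Ioo (-π) π, φ t ^ 2 / Real.sin (t / 2) ^ 2 with hBdef
  set μ := volume.restrict (Set.Ioc a b) with hμ
  set g : ℝ → ℝ := fun t => |φ t / Real.sin (t / 2)| with hg
  set h : ℝ → ℝ := fun t => |Real.sin (t / 2)| with hh
  have hsinc : Continuous fun t : ℝ => Real.sin (t / 2) :=
    Real.continuous_sin.comp (continuous_id.div_const 2)
  have hgm : AEStronglyMeasurable g μ :=
    ((hφ.measurable.div hsinc.measurable).abs).aestronglyMeasurable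
  have hhm : AEStronglyMeasurable h μ := (hsinc.abs).aestronglyMeasurable
  have hgsq : (fun t => g t ^ 2) = fun t => φ t ^ 2 / Real.sin (t / 2) ^ 2 := by
    funext t; rw [hg, sq_abs, div_pow]
  have h2 : ENNReal.ofReal (2 : ℝ) = 2 := by norm_num
  have memg : MemLp g (ENNReal.ofReal (2 : ℝ)) μ := by
    rw [h2, memLp_two_iff_integrable_sq hgm, hgsq]
    exact hB.mono_set hsub
  have memh : MemLp h (ENNReal.ofReal (2 : ℝ)) μ := by
    rw [h2, memLp_two_iff_integrable_sq hhm]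
    have : (fun t => h t ^ 2) = fun t => Real.sin (t / 2) ^ 2 := by
      funext t; rw [hh, sq_abs]
    rw [this]
    exact (hsinc.pow 2).integrableOn_Ioc
  have conj22 : (2 : ℝ).HolderConjugate 2 := ⟨by norm_num, by norm_num, by norm_num⟩
  have hold := integral_mul_le_Lp_mul_Lq_of_nonneg conj22
    (Filter.Eventually.of_forall fun t => abs_nonneg _)
    (Filter.Eventually.of_forall fun t => abs_nonneg _) memg memh
  have hrpow : ∀ x : ℝ, x ^ (2 : ℝ) = x ^ 2 := fun x => by
    rw [show (2 : ℝ) = ((2 : ℕ) : ℝ) by norm_num, Real.rpow_natCast]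
  -- rewrite LHS of hold
  have hLHS : ∫ t, g t * h t ∂μ = ∫ t in Set.Ioc a b, |φ t| := by
    rw [hμ]
    refine integral_congr_ae ?_
    have h0 : ∀ᵐ t : ℝ ∂volume, t ≠ 0 := by
      rw [ae_iff]
      simpa using (by simp : (volume : Measure ℝ) {(0 : ℝ)} = 0)
    filter_upwards [ae_restrict_mem measurableSet_Ioc, ae_restrict_of_ae h0] with t ht ht0
    have htI : t ∈ Set.Ioo (-π) π := hsub ht
    have hsne : Real.sin (t / 2) ≠ 0 := by
      rw [Ne, Real.sin_eq_zero_iff_of_lt_of_lt (by linarith [htI.1, Real.pi_pos])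
        (by linarith [htI.2, Real.pi_pos])]
      intro hc; exact ht0 (by linarith)
    rw [hg, hh, ← abs_mul, div_mul_cancel₀ _ hsne]
  have hX0 : 0 ≤ ∫ t, g t ^ 2 ∂μ := integral_nonneg fun t => sq_nonneg _
  have hY0 : 0 ≤ ∫ t, h t ^ 2 ∂μ := integral_nonneg fun t => sq_nonneg _
  have hX : ∫ t, g t ^ 2 ∂μ ≤ B := by
    rw [hμ, hgsq]
    exact setIntegral_mono_set hB
      (Filter.Eventually.of_forall fun t => by positivity)
      (HasSubset.Subset.eventuallyLE hsub)
  have hY : ∫ t, h t ^ 2 ∂μ ≤ (b ^ 3 - a ^ 3) / 12 := by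
    have hle : ∫ t, h t ^ 2 ∂μ ≤ ∫ t in Set.Ioc a b, t ^ 2 / 4 := by
      rw [hμ]
      refine setIntegral_mono_on ?_ ?_ measurableSet_Ioc ?_
      · exact (hsinc.abs.pow 2).integrableOn_Ioc
      · exact ((continuous_pow 2).div_const 4).integrableOn_Ioc
      · intro t _
        rw [hh, sq_abs]
        calc Real.sin (t / 2) ^ 2 ≤ (t / 2) ^ 2 := Real.sin_sq_le_sq
          _ = t ^ 2 / 4 := by ring
    have heq : ∫ t in Set.Ioc a b, t ^ 2 / 4 = (b ^ 3 - a ^ 3) / 12 := by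
      rw [← intervalIntegral.integral_of_le hab, intervalIntegral.integral_div, integral_pow]
      norm_num
      ring
    linarith
  calc ∫ t in Set.Ioc a b, |φ t| = ∫ t, g t * h t ∂μ := hLHS.symm
    _ ≤ (∫ t, g t ^ (2:ℝ) ∂μ) ^ ((1:ℝ)/2) * (∫ t, h t ^ (2:ℝ) ∂μ) ^ ((1:ℝ)/2) := hold
    _ = Real.sqrt (∫ t, g t ^ 2 ∂μ) * Real.sqrt (∫ t, h t ^ 2 ∂μ) := by
        simp_rw [hrpow, Real.sqrt_eq_rpow]
    _ ≤ Real.sqrt B * Real.sqrt ((b ^ 3 - a ^ 3) / 12) := by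
        exact mul_le_mul (Real.sqrt_le_sqrt hX) (Real.sqrt_le_sqrt hY)
          (Real.sqrt_nonneg _) (Real.sqrt_nonneg _)

open Real Set in
private lemma f_pointwise {f : ℝ → ℝ} (hf : ContDiff ℝ 1 f) (hf0 : f 0 = 0)
    (hInt : IntegrableOn (fun ϑ => deriv f ϑ ^ 2 / Real.sin (ϑ / 2) ^ 2) (Set.Ioo (-π) π))
    {ϑ : ℝ} (hϑ : ϑ ∈ Set.Ioo (-π) π) :
    |f ϑ| ≤ Real.sqrt (∫ t in Set.Ioo (-π) π, deriv f t ^ 2 / Real.sin (t / 2) ^ 2) *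
      Real.sqrt (|ϑ| ^ 3 / 12) := by
  have hφc : Continuous (deriv f) := hf.continuous_deriv le_rfl
  have hpi := Real.pi_pos
  rcases le_or_gt 0 ϑ with h0 | h0
  · have hftc : ∫ t in (0:ℝ)..ϑ, deriv f t = f ϑ - f 0 :=
      intervalIntegral.integral_deriv_eq_sub
        (fun x _ => (hf.differentiable one_ne_zero).differentiableAt)
        (hφc.intervalIntegrable _ _)
    have hsub : Set.Ioc 0 ϑ ⊆ Set.Ioo (-π) π := fun t ht =>
      ⟨by linarith [ht.1], lt_of_le_of_lt ht.2 hϑ.2⟩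
    calc |f ϑ| = |∫ t in (0:ℝ)..ϑ, deriv f t| := by rw [hftc, hf0, sub_zero]
      _ ≤ ∫ t in (0:ℝ)..ϑ, |deriv f t| := intervalIntegral.abs_integral_le_integral_abs h0
      _ = ∫ t in Set.Ioc 0 ϑ, |deriv f t| := intervalIntegral.integral_of_le h0
      _ ≤ _ * Real.sqrt ((ϑ ^ 3 - 0 ^ 3) / 12) := key_cs hφc hInt h0 hsub
      _ = _ * Real.sqrt (|ϑ| ^ 3 / 12) := by rw [abs_of_nonneg h0]; norm_num
  · have hftc : ∫ t in ϑ..(0:ℝ), deriv f t = f 0 - f ϑ :=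
      intervalIntegral.integral_deriv_eq_sub
        (fun x _ => (hf.differentiable one_ne_zero).differentiableAt)
        (hφc.intervalIntegrable _ _)
    have hsub : Set.Ioc ϑ 0 ⊆ Set.Ioo (-π) π := fun t ht =>
      ⟨lt_of_lt_of_le hϑ.1 ht.1.le, by linarith [ht.2]⟩
    calc |f ϑ| = |∫ t in ϑ..(0:ℝ), deriv f t| := by
          rw [hftc, hf0, zero_sub, abs_neg]
      _ ≤ ∫ t in ϑ..(0:ℝ), |deriv f t| :=
          intervalIntegral.abs_integral_le_integral_abs h0.le
      _ = ∫ t in Set.Ioc ϑ 0, |deriv f t| := intervalIntegral.integral_of_le h0.le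
      _ ≤ _ * Real.sqrt (((0:ℝ) ^ 3 - ϑ ^ 3) / 12) := key_cs hφc hInt h0.le hsub
      _ = _ * Real.sqrt (|ϑ| ^ 3 / 12) := by
          rw [abs_of_neg h0]
          congr 2
          ring


open Real Set in
/-- Bound on the value of the periodic Hilbert transform at `0`: there is a
constant `C > 0` (one may take `C = (π³/12)^{1/2}`) such that for every `C¹`,
`2π`-periodic `f` with `f(0) = 0` whose weighted derivative
`f'(ϑ)/sin(ϑ/2)` is square-integrable on `(-π, π)`, the function
`cot(ϑ/2)·f(ϑ)` is integrable on `(-π, π)` and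
`|(1/2π)∫ cot(ϑ/2) f(ϑ) dϑ| ≤ C·(∫ f'(ϑ)²/sin(ϑ/2)² dϑ)^{1/2}`. -/
theorem hilbert_at_zero_bound :
    ∃ C : ℝ, 0 < C ∧ C = Real.sqrt (Real.pi ^ 3 / 12) ∧
      ∀ f : ℝ → ℝ, ContDiff ℝ 1 f → Function.Periodic f (2 * Real.pi) → f 0 = 0 →
        IntegrableOn (fun ϑ => deriv f ϑ ^ 2 / Real.sin (ϑ / 2) ^ 2)
          (Set.Ioo (-Real.pi) Real.pi) →
        IntegrableOn (fun ϑ => (Real.cos (ϑ / 2) / Real.sin (ϑ / 2)) * f ϑ)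
          (Set.Ioo (-Real.pi) Real.pi)
        ∧ |(1 / (2 * Real.pi)) *
              ∫ ϑ in (-Real.pi)..Real.pi, (Real.cos (ϑ / 2) / Real.sin (ϑ / 2)) * f ϑ|
            ≤ C * Real.sqrt
                (∫ ϑ in (-Real.pi)..Real.pi, deriv f ϑ ^ 2 / Real.sin (ϑ / 2) ^ 2) := by
  have hpi := Real.pi_pos
  refine ⟨Real.sqrt (π ^ 3 / 12), Real.sqrt_pos.mpr (by positivity), rfl, ?_⟩
  intro f hf _hper hf0 hInt
  set B := ∫ t in Set.Ioo (-π) π, deriv f t ^ 2 / Real.sin (t / 2) ^ 2 with hBdef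
  have hB0 : 0 ≤ B := setIntegral_nonneg measurableSet_Ioo fun t _ => by positivity
  set M := Real.sqrt B * Real.sqrt (π ^ 3 / 12) with hM
  -- pointwise bound by the constant M
  have hbd : ∀ ϑ ∈ Set.Ioo (-π) π,
      |(Real.cos (ϑ / 2) / Real.sin (ϑ / 2)) * f ϑ| ≤ M := by
    intro ϑ hϑ
    rcases eq_or_ne ϑ 0 with rfl | hne
    · rw [hf0, mul_zero, abs_zero, hM]; positivity
    · have habs : |ϑ| < π := abs_lt.mpr ⟨hϑ.1, hϑ.2⟩
      have habs0 : 0 < |ϑ| := abs_pos.mpr hne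
      -- lower bound on |sin (ϑ/2)|
      have hs_lb : |ϑ| / π ≤ |Real.sin (ϑ / 2)| := by
        have h1 : 2 / π * (|ϑ| / 2) ≤ Real.sin (|ϑ| / 2) :=
          Real.mul_le_sin (by positivity) (by linarith)
        have h2 : |Real.sin (ϑ / 2)| = Real.sin (|ϑ| / 2) := by
          rcases abs_cases ϑ with ⟨he, hc⟩ | ⟨he, hc⟩
          · rw [he]
            exact abs_of_nonneg (Real.sin_nonneg_of_nonneg_of_le_pi (by linarith)
              (by linarith))
          · rw [he, neg_div, Real.sin_neg]
            rw [abs_of_nonpos]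
            · exact Real.sin_nonpos_of_nonpos_of_neg_pi_le (by linarith) (by linarith)
        rw [h2]
        calc |ϑ| / π = 2 / π * (|ϑ| / 2) := by ring
          _ ≤ _ := h1
      have hs_pos : 0 < |Real.sin (ϑ / 2)| := lt_of_lt_of_le (by positivity) hs_lb
      have hfb := f_pointwise hf hf0 hInt hϑ
      calc |(Real.cos (ϑ / 2) / Real.sin (ϑ / 2)) * f ϑ|
          = |Real.cos (ϑ / 2)| / |Real.sin (ϑ / 2)| * |f ϑ| := by
            rw [abs_mul, abs_div]
        _ ≤ 1 / |Real.sin (ϑ / 2)| * |f ϑ| := by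
            gcongr
            exact Real.abs_cos_le_one _
        _ = |f ϑ| / |Real.sin (ϑ / 2)| := by ring
        _ ≤ (Real.sqrt B * Real.sqrt (|ϑ| ^ 3 / 12)) / (|ϑ| / π) := by
            apply div_le_div₀ (by positivity) hfb (by positivity) hs_lb
        _ = Real.sqrt B * (π * Real.sqrt (|ϑ| ^ 3 / 12) / |ϑ|) := by
            field_simp
        _ ≤ Real.sqrt B * Real.sqrt (π ^ 3 / 12) := by
            apply mul_le_mul_of_nonneg_left _ (Real.sqrt_nonneg _)
            have hsq : Real.sqrt (|ϑ| ^ 3 / 12) = |ϑ| * Real.sqrt (|ϑ| / 12) := by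
              rw [show |ϑ| ^ 3 / 12 = |ϑ| ^ 2 * (|ϑ| / 12) by ring,
                Real.sqrt_mul (sq_nonneg _), Real.sqrt_sq (abs_nonneg _)]
            rw [hsq]
            rw [show π * (|ϑ| * Real.sqrt (|ϑ| / 12)) / |ϑ| = π * Real.sqrt (|ϑ| / 12) by
              field_simp]
            calc π * Real.sqrt (|ϑ| / 12) ≤ π * Real.sqrt (π / 12) := by
                  gcongr
              _ = Real.sqrt (π ^ 2) * Real.sqrt (π / 12) := by
                  rw [Real.sqrt_sq hpi.le]
              _ = Real.sqrt (π ^ 3 / 12) := by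
                  rw [← Real.sqrt_mul (sq_nonneg _)]
                  congr 1; ring
  -- measurability
  have hmeas : AEStronglyMeasurable (fun ϑ => (Real.cos (ϑ / 2) / Real.sin (ϑ / 2)) * f ϑ)
      (volume.restrict (Set.Ioo (-π) π)) := by
    apply Measurable.aestronglyMeasurable
    exact ((Real.continuous_cos.comp (continuous_id.div_const 2)).measurable.div
      (Real.continuous_sin.comp (continuous_id.div_const 2)).measurable).mul
      hf.continuous.measurable
  -- integrability
  have hint2 : IntegrableOn (fun ϑ => (Real.cos (ϑ / 2) / Real.sin (ϑ / 2)) * f ϑ)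
      (Set.Ioo (-π) π) := by
    refine Integrable.mono' (g := fun _ => M) (integrableOn_const measure_Ioo_lt_top.ne) hmeas ?_
    rw [ae_restrict_iff' measurableSet_Ioo]
    exact Filter.Eventually.of_forall fun ϑ hϑ => by
      simpa only [Real.norm_eq_abs] using hbd ϑ hϑ
  refine ⟨hint2, ?_⟩
  have hIple : -π ≤ π := by linarith
  have hIeq : ∫ ϑ in (-π)..π, (Real.cos (ϑ / 2) / Real.sin (ϑ / 2)) * f ϑ
      = ∫ ϑ in Set.Ioo (-π) π, (Real.cos (ϑ / 2) / Real.sin (ϑ / 2)) * f ϑ := by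
    rw [intervalIntegral.integral_of_le hIple, integral_Ioc_eq_integral_Ioo]
  have hBeq : ∫ ϑ in (-π)..π, deriv f ϑ ^ 2 / Real.sin (ϑ / 2) ^ 2 = B := by
    rw [intervalIntegral.integral_of_le hIple, integral_Ioc_eq_integral_Ioo]
  rw [hIeq, hBeq]
  have hvol : ((volume : Measure ℝ) (Set.Ioo (-π) π)).toReal = 2 * π := by
    rw [Real.volume_Ioo, ENNReal.toReal_ofReal (by linarith)]
    ring
  have hnorm : ‖∫ ϑ in Set.Ioo (-π) π, (Real.cos (ϑ / 2) / Real.sin (ϑ / 2)) * f ϑ‖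
      ≤ M * (2 * π) := by
    rw [← hvol]
    exact norm_setIntegral_le_of_norm_le_const measure_Ioo_lt_top
      fun x hx => by simpa only [Real.norm_eq_abs] using hbd x hx
  rw [Real.norm_eq_abs] at hnorm
  rw [abs_mul, abs_of_pos (by positivity : (0:ℝ) < 1 / (2 * π))]
  calc 1 / (2 * π) * |∫ ϑ in Set.Ioo (-π) π, (Real.cos (ϑ / 2) / Real.sin (ϑ / 2)) * f ϑ|
      ≤ 1 / (2 * π) * (M * (2 * π)) := by gcongr
    _ = M := by field_simp
    _ = Real.sqrt (π ^ 3 / 12) * Real.sqrt B := mul_comm _ _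
end

section
/- For every twice continuously differentiable function f : [−π, π] → ℝ, ∫_{−π}^{π} (f′(θ) − f′(0))²/sin(θ/2)² dθ ≤ 4π²·∫_{−π}^{π} f″(θ)² dθ, where the integrand on the left extends continuously to θ = 0. -/
set_option maxHeartbeats 1000000

open Set MeasureTheory intervalIntegral Real Filter

private lemma hardy_ptwise {a b t : ℝ} (ht : t ≠ 0) :
    (1/2) * (a^2/t^2) - 2*b^2 ≤ a^2/t^2 - 2*a*b/t := by
  have h1 : a^2/t^2 = (a/t)^2 := by rw [div_pow]
  have h2 : 2*a*b/t = 2*(a/t)*b := by ring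
  rw [h1, h2]
  nlinarith [sq_nonneg (a/t - 2*b)]

private lemma hardy_side (g h : ℝ → ℝ) (c d : ℝ) (hcd : c ≤ d) (h0 : (0:ℝ) ∉ Set.Icc c d)
    (hg : ∀ θ ∈ Set.Icc c d, HasDerivWithinAt g (h θ) (Set.Icc c d) θ)
    (hh : ContinuousOn h (Set.Icc c d)) :
    (∫ θ in c..d, (g θ)^2/θ^2) ≤ 4 * (∫ θ in c..d, (h θ)^2) + 2*((g c)^2/c - (g d)^2/d) := by
  have hne : ∀ θ ∈ Set.Icc c d, θ ≠ 0 := fun θ hθ hz => h0 (hz ▸ hθ)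
  have hgc : ContinuousOn g (Set.Icc c d) := fun x hx => (hg x hx).continuousWithinAt
  have hid : ContinuousOn (fun θ : ℝ => θ) (Set.Icc c d) := continuousOn_id
  have huIcc : Set.uIcc c d = Set.Icc c d := uIcc_of_le hcd
  have hVcont : ContinuousOn (fun θ => (g θ)^2/θ^2) (Set.Icc c d) :=
    (hgc.pow 2).div (hid.pow 2) (fun θ hθ => pow_ne_zero 2 (hne θ hθ))
  have hφ'cont : ContinuousOn (fun θ => (g θ)^2/θ^2 - 2*(g θ)*(h θ)/θ) (Set.Icc c d) :=
    hVcont.sub (((continuousOn_const.mul hgc).mul hh).div hid hne)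
  have hφcont : ContinuousOn (fun θ => -(g θ)^2/θ) (Set.Icc c d) :=
    ((hgc.pow 2).neg.div hid hne)
  have hderiv : ∀ θ ∈ Set.Icc c d, HasDerivWithinAt (fun θ => -(g θ)^2/θ)
      ((g θ)^2/θ^2 - 2*(g θ)*(h θ)/θ) (Set.Icc c d) θ := by
    intro θ hθ
    have h1 : HasDerivWithinAt (fun θ => -(g θ)^2) (-(2 * g θ ^ 1 * h θ)) (Set.Icc c d) θ :=
      ((hg θ hθ).pow 2).neg
    have h2 := h1.div (hasDerivWithinAt_id θ _) (hne θ hθ)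
    refine HasDerivWithinAt.congr_deriv h2 ?_
    have ht := hne θ hθ
    simp only [id]
    field_simp
    ring
  have key : ∫ θ in c..d, ((g θ)^2/θ^2 - 2*(g θ)*(h θ)/θ)
      = -(g d)^2/d - -(g c)^2/c :=
    integral_eq_sub_of_hasDeriv_right_of_le hcd hφcont
      (fun x hx => ((hderiv x (Set.Ioo_subset_Icc_self hx)).hasDerivAt
        (Icc_mem_nhds hx.1 hx.2)).hasDerivWithinAt)
      ((huIcc ▸ hφ'cont).intervalIntegrable)
  have intV : IntervalIntegrable (fun θ => (g θ)^2/θ^2) volume c d :=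
    (huIcc ▸ hVcont).intervalIntegrable
  have inth2 : IntervalIntegrable (fun θ => (h θ)^2) volume c d :=
    (huIcc ▸ ((hh.pow 2) : ContinuousOn _ _)).intervalIntegrable
  have intL : IntervalIntegrable (fun θ => (1/2)*((g θ)^2/θ^2) - 2*(h θ)^2) volume c d :=
    (intV.const_mul _).sub (inth2.const_mul _)
  have mono1 : (∫ θ in c..d, ((1/2)*((g θ)^2/θ^2) - 2*(h θ)^2))
      ≤ ∫ θ in c..d, ((g θ)^2/θ^2 - 2*(g θ)*(h θ)/θ) :=
    integral_mono_on hcd intL ((huIcc ▸ hφ'cont).intervalIntegrable)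
      (fun θ hθ => hardy_ptwise (hne θ hθ))
  have split : (∫ θ in c..d, ((1/2)*((g θ)^2/θ^2) - 2*(h θ)^2))
      = (1/2)*(∫ θ in c..d, (g θ)^2/θ^2) - 2*(∫ θ in c..d, (h θ)^2) := by
    rw [integral_sub (intV.const_mul _) (inth2.const_mul _),
      intervalIntegral.integral_const_mul, intervalIntegral.integral_const_mul]
  have e1 : -(g d)^2/d = -((g d)^2/d) := by rw [neg_div]
  have e2 : -(g c)^2/c = -((g c)^2/c) := by rw [neg_div]
  rw [split, key, e1, e2] at mono1
  linarith



/-- Hardy-type inequality behind the embedding `H²(𝕋) ↪ Z₀ ⊕ Z₁ ⊕ ℋ`: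
for every twice continuously differentiable `f` on `[-π, π]` (with first and
second derivatives `f'` and `f''`),
`∫_{-π}^{π} (f'(θ) - f'(0))²/sin(θ/2)² dθ ≤ 4π² ∫_{-π}^{π} f''(θ)² dθ`. -/
theorem hardy_type_inequality (f f' f'' : ℝ → ℝ)
    (hf' : ∀ θ ∈ Set.Icc (-Real.pi) Real.pi,
      HasDerivWithinAt f (f' θ) (Set.Icc (-Real.pi) Real.pi) θ)
    (hf'' : ∀ θ ∈ Set.Icc (-Real.pi) Real.pi,
      HasDerivWithinAt f' (f'' θ) (Set.Icc (-Real.pi) Real.pi) θ)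
    (hcont : ContinuousOn f'' (Set.Icc (-Real.pi) Real.pi)) :
    (∫ θ in (-Real.pi)..Real.pi, (f' θ - f' 0) ^ 2 / Real.sin (θ / 2) ^ 2)
      ≤ 4 * Real.pi ^ 2 * ∫ θ in (-Real.pi)..Real.pi, f'' θ ^ 2 := by
  have pi_pos := Real.pi_pos
  set g : ℝ → ℝ := fun θ => f' θ - f' 0 with hgdef
  have hg : ∀ θ ∈ Set.Icc (-π) π, HasDerivWithinAt g (f'' θ) (Set.Icc (-π) π) θ :=
    fun θ hθ => (hf'' θ hθ).sub_const _
  have hgc : ContinuousOn g (Set.Icc (-π) π) := fun x hx => (hg x hx).continuousWithinAt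
  obtain ⟨C, hC⟩ := (isCompact_Icc (a := -π) (b := π)).exists_bound_of_continuousOn hcont
  set M := max C 0 with hM
  have hM0 : 0 ≤ M := le_max_right _ _
  have hMb : ∀ θ ∈ Set.Icc (-π) π, |f'' θ| ≤ M := fun θ hθ => (hC θ hθ).trans (le_max_left _ _)
  have h0mem : (0:ℝ) ∈ Set.Icc (-π) π := ⟨by linarith, by linarith⟩
  have glip : ∀ θ ∈ Set.Icc (-π) π, |g θ| ≤ M * |θ| := by
    intro θ hθ
    have := (convex_Icc (-π) π).norm_image_sub_le_of_norm_hasDerivWithin_le hg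
      (fun x hx => hMb x hx) h0mem hθ
    simpa [hgdef] using this
  have gsq : ∀ θ ∈ Set.Icc (-π) π, (g θ)^2 ≤ M^2 * θ^2 := by
    intro θ hθ
    have h1 : |g θ|^2 ≤ (M*|θ|)^2 := pow_le_pow_left₀ (abs_nonneg _) (glip θ hθ) 2
    calc (g θ)^2 = |g θ|^2 := (sq_abs _).symm
      _ ≤ (M*|θ|)^2 := h1
      _ = M^2*θ^2 := by rw [mul_pow, sq_abs]
  have Vbound : ∀ θ ∈ Set.Icc (-π) π, (g θ)^2/θ^2 ≤ M^2 := by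
    intro θ hθ
    rcases eq_or_ne θ 0 with rfl | hθ0
    · simp [hgdef]; positivity
    · rw [div_le_iff₀ (by positivity)]
      calc (g θ)^2 ≤ M^2*θ^2 := gsq θ hθ
        _ = M^2*θ^2 := rfl
  have sinb : ∀ θ ∈ Set.Icc (-π) π, θ ≠ 0 → θ^2/π^2 ≤ Real.sin (θ/2)^2 := by
    intro θ hθ hθ0
    have habs : |θ| ≤ π := abs_le.mpr ⟨hθ.1, hθ.2⟩
    have h2 : |θ|/π ≤ Real.sin (|θ|/2) := by
      have := Real.mul_le_sin (x := |θ|/2) (by positivity) (by linarith)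
      calc |θ|/π = 2/π*(|θ|/2) := by ring
        _ ≤ Real.sin (|θ|/2) := this
    have hsq : (|θ|/π)^2 ≤ Real.sin (|θ|/2)^2 :=
      pow_le_pow_left₀ (by positivity) h2 2
    have habs2 : Real.sin (θ/2)^2 = Real.sin (|θ|/2)^2 := by
      rcases abs_choice θ with h | h
      · rw [h]
      · rw [h, neg_div, Real.sin_neg, neg_sq]
    rw [habs2]
    calc θ^2/π^2 = (|θ|/π)^2 := by rw [div_pow, sq_abs]
      _ ≤ _ := hsq
  have Wbound : ∀ θ ∈ Set.Icc (-π) π,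
      (g θ)^2 / Real.sin (θ/2)^2 ≤ π^2 * ((g θ)^2/θ^2) := by
    intro θ hθ
    rcases eq_or_ne θ 0 with rfl | hθ0
    · simp [hgdef]
    · have hs := sinb θ hθ hθ0
      have hpos : (0:ℝ) < θ^2/π^2 := by positivity
      calc (g θ)^2 / Real.sin (θ/2)^2 ≤ (g θ)^2 / (θ^2/π^2) :=
            div_le_div_of_nonneg_left (by positivity) hpos hs
        _ = π^2 * ((g θ)^2/θ^2) := by
            rw [div_div_eq_mul_div]; ring
  -- integrability
  have hle : (-π : ℝ) ≤ π := by linarith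
  have hgm : AEStronglyMeasurable g (volume.restrict (Set.Ioc (-π) π)) :=
    (hgc.mono Set.Ioc_subset_Icc_self).aestronglyMeasurable measurableSet_Ioc
  have hgm2 : AEStronglyMeasurable (fun θ => (g θ)^2) (volume.restrict (Set.Ioc (-π) π)) := by
    have := hgm.mul hgm; simp only [sq]; exact this
  have measV : IntegrableOn (fun θ => (g θ)^2/θ^2) (Set.Ioc (-π) π) volume := by
    refine ⟨(hgm2.aemeasurable.div ((continuous_pow 2).aestronglyMeasurable.aemeasurable : AEMeasurable (fun θ : ℝ => θ^2) _)).aestronglyMeasurable, ?_⟩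
    refine HasFiniteIntegral.restrict_of_bounded (C := M^2) measure_Ioc_lt_top ?_
    rw [ae_restrict_iff' measurableSet_Ioc]
    refine Eventually.of_forall fun θ hθ => ?_
    have hθ' : θ ∈ Set.Icc (-π) π := Set.Ioc_subset_Icc_self hθ
    rw [Real.norm_eq_abs, abs_of_nonneg (by positivity)]
    exact Vbound θ hθ'
  have measW : IntegrableOn (fun θ => (g θ)^2/Real.sin (θ/2)^2) (Set.Ioc (-π) π) volume := by
    refine ⟨(hgm2.aemeasurable.div (((Real.continuous_sin.comp (continuous_id.div_const 2)).pow 2).aestronglyMeasurable.aemeasurable : AEMeasurable (fun θ : ℝ => Real.sin (θ/2)^2) _)).aestronglyMeasurable, ?_⟩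
    refine HasFiniteIntegral.restrict_of_bounded (C := π^2 * M^2) measure_Ioc_lt_top ?_
    rw [ae_restrict_iff' measurableSet_Ioc]
    refine Eventually.of_forall fun θ hθ => ?_
    have hθ' : θ ∈ Set.Icc (-π) π := Set.Ioc_subset_Icc_self hθ
    rw [Real.norm_eq_abs, abs_of_nonneg (by positivity)]
    calc (g θ)^2 / Real.sin (θ/2)^2 ≤ π^2 * ((g θ)^2/θ^2) := Wbound θ hθ'
      _ ≤ π^2 * M^2 := by
          have := Vbound θ hθ'
          nlinarith [sq_nonneg π]
  have intV : IntervalIntegrable (fun θ => (g θ)^2/θ^2) volume (-π) π := by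
    rw [intervalIntegrable_iff, Set.uIoc_of_le hle]; exact measV
  have intW : IntervalIntegrable (fun θ => (g θ)^2/Real.sin (θ/2)^2) volume (-π) π := by
    rw [intervalIntegrable_iff, Set.uIoc_of_le hle]; exact measW
  have inth2 : IntervalIntegrable (fun θ => (f'' θ)^2) volume (-π) π := by
    have : ContinuousOn (fun θ => (f'' θ)^2) (Set.uIcc (-π) π) := by
      rw [Set.uIcc_of_le hle]; exact hcont.pow 2
    exact this.intervalIntegrable
  set B := ∫ θ in (-π)..π, (f'' θ)^2 with hB
  -- step 1
  have step1 : (∫ θ in (-π)..π, (g θ)^2/Real.sin (θ/2)^2)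
      ≤ π^2 * ∫ θ in (-π)..π, (g θ)^2/θ^2 := by
    rw [← intervalIntegral.integral_const_mul]
    exact integral_mono_on hle intW (intV.const_mul _) Wbound
  -- step 2: Hardy, via ε → 0
  have step2 : (∫ θ in (-π)..π, (g θ)^2/θ^2) ≤ 4*B := by
    refine ge_of_tendsto (x := nhdsWithin 0 (Set.Ioi (0:ℝ)))
      (f := fun ε : ℝ => 4*B + 6*M^2*ε) ?_ ?_
    · have h : Tendsto (fun ε : ℝ => 4*B + 6*M^2*ε) (nhdsWithin 0 (Set.Ioi (0:ℝ)))
          (nhds (4*B + 6*M^2*0)) :=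
        ((continuous_const.add (continuous_const.mul continuous_id)).tendsto 0).mono_left
          nhdsWithin_le_nhds
      simpa using h
    · filter_upwards [Ioo_mem_nhdsGT_of_mem ⟨le_refl 0, pi_pos⟩] with ε hε
      obtain ⟨hε0, hεπ⟩ := hε
      have hsub1 : Set.Icc ε π ⊆ Set.Icc (-π) π := Set.Icc_subset_Icc (by linarith) le_rfl
      have hsub2 : Set.Icc (-π) (-ε) ⊆ Set.Icc (-π) π := Set.Icc_subset_Icc le_rfl (by linarith)
      have hεmem : ε ∈ Set.Icc (-π) π := ⟨by linarith, le_of_lt hεπ⟩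
      have hεmem' : -ε ∈ Set.Icc (-π) π := ⟨by linarith, by linarith⟩
      have hπmem : π ∈ Set.Icc (-π) π := ⟨by linarith, le_rfl⟩
      have hπmem' : -π ∈ Set.Icc (-π) π := ⟨le_rfl, by linarith⟩
      have h1 := hardy_side g f'' ε π (le_of_lt hεπ)
        (fun h => absurd h.1 (not_le.2 hε0))
        (fun θ hθ => ((hg θ (hsub1 hθ)).mono hsub1))
        (hcont.mono hsub1)
      have h2 := hardy_side g f'' (-π) (-ε) (by linarith)
        (fun h => absurd h.2 (not_le.2 (by linarith)))
        (fun θ hθ => ((hg θ (hsub2 hθ)).mono hsub2))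
        (hcont.mono hsub2)
      -- boundary terms
      have bt1 : (g ε)^2/ε ≤ M^2*ε := by
        rw [div_le_iff₀ hε0]
        calc (g ε)^2 ≤ M^2*ε^2 := gsq ε hεmem
          _ = M^2*ε*ε := by ring
      have bt2 : (0:ℝ) ≤ (g π)^2/π := by positivity
      have bt3 : (g (-π))^2/(-π) ≤ 0 := by
        rw [div_neg, neg_nonpos]
        positivity
      have bt4 : (g (-ε))^2/(-ε) = -((g (-ε))^2/ε) := by rw [div_neg]
      have bt5 : (g (-ε))^2/ε ≤ M^2*ε := by
        rw [div_le_iff₀ hε0]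
        calc (g (-ε))^2 ≤ M^2*(-ε)^2 := gsq (-ε) hεmem'
          _ = M^2*ε*ε := by ring
      -- middle piece
      have midV : (∫ θ in (-ε)..ε, (g θ)^2/θ^2) ≤ M^2*(2*ε) := by
        have hb : ∀ x ∈ Set.uIoc (-ε) ε, ‖(g x)^2/x^2‖ ≤ M^2 := by
          intro x hx
          rw [Set.uIoc_of_le (by linarith)] at hx
          have hx' : x ∈ Set.Icc (-π) π := ⟨by linarith [hx.1], by linarith [hx.2]⟩
          rw [Real.norm_eq_abs, abs_of_nonneg (by positivity)]
          exact Vbound x hx'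
        have := intervalIntegral.norm_integral_le_of_norm_le_const hb
        rw [Real.norm_eq_abs] at this
        have h2' : |ε - -ε| = 2*ε := by rw [abs_of_nonneg (by linarith)]; ring
        rw [h2'] at this
        calc (∫ θ in (-ε)..ε, (g θ)^2/θ^2) ≤ |∫ θ in (-ε)..ε, (g θ)^2/θ^2| := le_abs_self _
          _ ≤ M^2*(2*ε) := this
      -- splitting integrals
      have iV1 : IntervalIntegrable (fun θ => (g θ)^2/θ^2) volume (-π) (-ε) :=
        intV.mono_set (by rw [Set.uIcc_of_le hle, Set.uIcc_of_le (by linarith : -π ≤ -ε)]; exact hsub2)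
      have iV2 : IntervalIntegrable (fun θ => (g θ)^2/θ^2) volume (-ε) ε :=
        intV.mono_set (by
          rw [Set.uIcc_of_le hle, Set.uIcc_of_le (by linarith : -ε ≤ ε)]
          exact Set.Icc_subset_Icc (by linarith) (by linarith))
      have iV3 : IntervalIntegrable (fun θ => (g θ)^2/θ^2) volume ε π :=
        intV.mono_set (by rw [Set.uIcc_of_le hle, Set.uIcc_of_le (le_of_lt hεπ)]; exact hsub1)
      have ih1 : IntervalIntegrable (fun θ => (f'' θ)^2) volume (-π) (-ε) :=
        inth2.mono_set (by rw [Set.uIcc_of_le hle, Set.uIcc_of_le (by linarith : -π ≤ -ε)]; exact hsub2)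
      have ih2 : IntervalIntegrable (fun θ => (f'' θ)^2) volume (-ε) ε :=
        inth2.mono_set (by
          rw [Set.uIcc_of_le hle, Set.uIcc_of_le (by linarith : -ε ≤ ε)]
          exact Set.Icc_subset_Icc (by linarith) (by linarith))
      have ih3 : IntervalIntegrable (fun θ => (f'' θ)^2) volume ε π :=
        inth2.mono_set (by rw [Set.uIcc_of_le hle, Set.uIcc_of_le (le_of_lt hεπ)]; exact hsub1)
      have splitV : (∫ θ in (-π)..π, (g θ)^2/θ^2)
          = (∫ θ in (-π)..(-ε), (g θ)^2/θ^2) + ((∫ θ in (-ε)..ε, (g θ)^2/θ^2)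
            + (∫ θ in ε..π, (g θ)^2/θ^2)) := by
        rw [← integral_add_adjacent_intervals iV1 (iV2.trans iV3),
          ← integral_add_adjacent_intervals iV2 iV3]
      have splitB : B = (∫ θ in (-π)..(-ε), (f'' θ)^2) + ((∫ θ in (-ε)..ε, (f'' θ)^2)
            + (∫ θ in ε..π, (f'' θ)^2)) := by
        rw [hB, ← integral_add_adjacent_intervals ih1 (ih2.trans ih3),
          ← integral_add_adjacent_intervals ih2 ih3]
      have midB : (0:ℝ) ≤ ∫ θ in (-ε)..ε, (f'' θ)^2 :=
        integral_nonneg (by linarith) (fun x _ => sq_nonneg _)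
      linarith
  calc (∫ θ in (-π)..π, (g θ)^2/Real.sin (θ/2)^2)
      ≤ π^2 * ∫ θ in (-π)..π, (g θ)^2/θ^2 := step1
    _ ≤ π^2 * (4*B) := mul_le_mul_of_nonneg_left step2 (sq_nonneg π)
    _ = 4 * π^2 * B := by ring
end

section
/- Let C > 0, Γ > 0, β ∈ (0, 3/8), and let ε > 0 satisfy ε < min{(3 − 8β)/(54√2·C·Γ), (2 − 2β)/((2 + 5√2)·C·Γ)}. Let E, y : [0, ∞) → ℝ be continuously differentiable with E(t) ≥ 0 for all t ≥ 0, and suppose: (i) (d/dt)(E(t)²) ≤ −(3/4)·E(t)² + ε·C·E(t)³ + ε·C·y(t)²·E(t) for all t ≥ 0; (ii) y′(t) = −2·y(t) + g(t) for a continuous function g with |g(t)| ≤ 2·E(t) + ε·C·(E(t)² + E(t)·|y(t)|) for all t ≥ 0; (iii) E(0)² < 2Γ² and |y(0)| < Γ. Then for all t ≥ 0, E(t)² ≤ 2Γ²·e^{−2βt} and |y(t)| ≤ 5Γ·e^{−βt}. -/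
open Set Filter Topology

private lemma cont_exp_lin (c : ℝ) : Continuous fun t : ℝ => Real.exp (c * t) :=
  Real.continuous_exp.comp (continuous_const.mul continuous_id)

private lemma hasDerivAt_exp_lin (c t : ℝ) :
    HasDerivAt (fun x : ℝ => Real.exp (c * x)) (c * Real.exp (c * t)) t := by
  have h := (HasDerivAt.exp ((hasDerivAt_id t).const_mul c))
  simp only [id_eq, mul_one] at h
  exact h.congr_deriv (mul_comm _ _)

private lemma mono_aux {f f' : ℝ → ℝ} {T : ℝ} (hT : 0 ≤ T)
    (hc : ContinuousOn f (Set.Icc 0 T))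
    (hd : ∀ t ∈ Set.Ioo (0:ℝ) T, HasDerivAt f (f' t) t)
    (h0 : ∀ t ∈ Set.Ioo (0:ℝ) T, 0 ≤ f' t) : f 0 ≤ f T := by
  have hm : MonotoneOn f (Set.Icc 0 T) := by
    apply monotoneOn_of_deriv_nonneg (convex_Icc 0 T) hc
    · intro x hx
      rw [interior_Icc] at hx
      exact (hd x hx).differentiableAt.differentiableWithinAt
    · intro x hx
      rw [interior_Icc] at hx
      rw [(hd x hx).deriv]
      exact h0 x hx
  exact hm (Set.left_mem_Icc.2 hT) (Set.right_mem_Icc.2 hT) hT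

private lemma anti_aux {f f' : ℝ → ℝ} {T : ℝ} (hT : 0 ≤ T)
    (hc : ContinuousOn f (Set.Icc 0 T))
    (hd : ∀ t ∈ Set.Ioo (0:ℝ) T, HasDerivAt f (f' t) t)
    (h0 : ∀ t ∈ Set.Ioo (0:ℝ) T, f' t ≤ 0) : f T ≤ f 0 := by
  have hm : AntitoneOn f (Set.Icc 0 T) := by
    apply antitoneOn_of_deriv_nonpos (convex_Icc 0 T) hc
    · intro x hx
      rw [interior_Icc] at hx
      exact (hd x hx).differentiableAt.differentiableWithinAt
    · intro x hx
      rw [interior_Icc] at hx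
      rw [(hd x hx).deriv]
      exact h0 x hx
  exact hm (Set.left_mem_Icc.2 hT) (Set.right_mem_Icc.2 hT) hT

private lemma extract_aux {D A G Q P e1 : ℝ} (hD : 0 < D) (hA : A < G * D) (hQ0 : Q < G)
    (he : 1 ≤ e1) (hW : (D * P - A) * e1 ≤ D * Q - A) : P < G := by
  rcases le_or_gt (D * P) A with h | h
  · nlinarith
  · have h2 : D * P - A ≤ (D * P - A) * e1 := le_mul_of_one_le_right (by linarith) he
    nlinarith

set_option maxHeartbeats 2000000 in
private lemma key_step
    (C Γ β ε : ℝ) (hC : 0 < C) (hΓ : 0 < Γ) (hβ0 : 0 < β) (hβ : β < 3 / 8)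
    (hε0 : 0 < ε)
    (hε1 : ε * (54 * Real.sqrt 2 * C * Γ) < 3 - 8 * β)
    (hε2 : ε * ((2 + 5 * Real.sqrt 2) * C * Γ) < 2 - 2 * β)
    (E y g E' y' : ℝ → ℝ)
    (hE : ∀ t ∈ Set.Ici (0 : ℝ), HasDerivWithinAt E (E' t) (Set.Ici 0) t)
    (hy : ∀ t ∈ Set.Ici (0 : ℝ), HasDerivWithinAt y (y' t) (Set.Ici 0) t)
    (hEnonneg : ∀ t ≥ (0 : ℝ), 0 ≤ E t)
    (hEineq : ∀ t ≥ (0 : ℝ),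
      2 * E t * E' t
        ≤ -(3 / 4) * E t ^ 2 + ε * C * E t ^ 3 + ε * C * y t ^ 2 * E t)
    (hyODE : ∀ t ≥ (0 : ℝ), y' t = -2 * y t + g t)
    (hgbound : ∀ t ≥ (0 : ℝ),
      |g t| ≤ 2 * E t + ε * C * (E t ^ 2 + E t * |y t|))
    (hE0 : E 0 ^ 2 < 2 * Γ ^ 2) (hy0 : |y 0| < Γ)
    (T : ℝ) (hT : 0 ≤ T)
    (hb : ∀ t ∈ Set.Icc (0:ℝ) T,
      E t ^ 2 ≤ 2 * Γ ^ 2 * Real.exp (-2 * β * t)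
      ∧ |y t| ≤ 5 * Γ * Real.exp (-β * t)) :
    E T ^ 2 < 2 * Γ ^ 2 * Real.exp (-2 * β * T)
      ∧ |y T| < 5 * Γ * Real.exp (-β * T) := by
  have hs2 : Real.sqrt 2 ^ 2 = 2 := Real.sq_sqrt (by norm_num)
  have hs2pos : (0:ℝ) < Real.sqrt 2 := Real.sqrt_pos.2 (by norm_num)
  have hs2lt : Real.sqrt 2 < 3/2 := by nlinarith
  have hεC : 0 < ε * C := mul_pos hε0 hC
  have hδ₀pos : 0 < 3/4 - 2*β - Real.sqrt 2 * ε * C * Γ := by nlinarith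
  have hA : 25 * Real.sqrt 2 * ε * C * Γ^3
      < 2 * Γ^2 * (3/4 - 2*β - Real.sqrt 2 * ε * C * Γ) := by
    nlinarith [mul_lt_mul_of_pos_left hε1 (show (0:ℝ) < Γ^2/2 by positivity)]
  have hEc : ContinuousOn E (Set.Ici 0) := fun t ht => (hE t ht).continuousWithinAt
  have hyc : ContinuousOn y (Set.Ici 0) := fun t ht => (hy t ht).continuousWithinAt
  -- pointwise bound on E from the bootstrap assumption
  have hEb : ∀ t ∈ Set.Icc (0:ℝ) T, E t ≤ Real.sqrt 2 * Γ * Real.exp (-β*t) := by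
    intro t htm
    have h1 := (hb t htm).1
    have hexp : Real.exp (-2*β*t) = Real.exp (-β*t) * Real.exp (-β*t) := by
      rw [← Real.exp_add]; ring_nf
    have hEn := hEnonneg t htm.1
    have h2 : (Real.sqrt 2 * Γ * Real.exp (-β*t))^2 = 2 * Γ^2 * Real.exp (-2*β*t) := by
      rw [mul_pow, mul_pow, hs2, hexp]; ring
    calc E t = Real.sqrt (E t ^ 2) := (Real.sqrt_sq hEn).symm
      _ ≤ Real.sqrt ((Real.sqrt 2 * Γ * Real.exp (-β*t))^2) := by
          apply Real.sqrt_le_sqrt; rw [h2]; exact h1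
      _ = Real.sqrt 2 * Γ * Real.exp (-β*t) := Real.sqrt_sq (by positivity)
  constructor
  · -- energy part
    have hWT :
        (fun t => ((3/4 - 2*β - Real.sqrt 2 * ε * C * Γ) * (E t ^ 2 * Real.exp (2*β*t))
            - 25 * Real.sqrt 2 * ε * C * Γ^3) * Real.exp ((3/4 - 2*β - Real.sqrt 2 * ε * C * Γ)*t)) T
          ≤ (fun t => ((3/4 - 2*β - Real.sqrt 2 * ε * C * Γ) * (E t ^ 2 * Real.exp (2*β*t))
            - 25 * Real.sqrt 2 * ε * C * Γ^3) * Real.exp ((3/4 - 2*β - Real.sqrt 2 * ε * C * Γ)*t)) 0 := by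
      apply anti_aux (f' := fun t =>
        ((3/4 - 2*β - Real.sqrt 2 * ε * C * Γ) * ((2*E t*E' t)*Real.exp (2*β*t)
            + (E t^2)*(2*β*Real.exp (2*β*t)))) * Real.exp ((3/4 - 2*β - Real.sqrt 2 * ε * C * Γ)*t)
          + ((3/4 - 2*β - Real.sqrt 2 * ε * C * Γ) * (E t^2*Real.exp (2*β*t))
            - 25 * Real.sqrt 2 * ε * C * Γ^3)
            * ((3/4 - 2*β - Real.sqrt 2 * ε * C * Γ)*Real.exp ((3/4 - 2*β - Real.sqrt 2 * ε * C * Γ)*t))) hT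
      · apply ContinuousOn.mul
        · apply ContinuousOn.sub _ continuousOn_const
          apply ContinuousOn.mul continuousOn_const
          exact ((hEc.mono Set.Icc_subset_Ici_self).pow 2).mul (cont_exp_lin (2*β)).continuousOn
        · exact (cont_exp_lin _).continuousOn
      · intro t htm
        have hEt : HasDerivAt E (E' t) t :=
          (hE t (le_of_lt htm.1)).hasDerivAt (Ici_mem_nhds htm.1)
        have h1 : HasDerivAt (fun t => E t ^ 2) (2*E t*E' t) t := by
          have h := hEt.pow 2
          norm_num at h
          exact h.congr_deriv (by ring)
        have h2 := hasDerivAt_exp_lin (2*β) t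
        have h3 := hasDerivAt_exp_lin (3/4 - 2*β - Real.sqrt 2 * ε * C * Γ) t
        exact (((h1.mul h2).const_mul _).sub_const _).mul h3
      · intro t htm
        have htIcc : t ∈ Set.Icc (0:ℝ) T := ⟨le_of_lt htm.1, le_of_lt htm.2⟩
        have hupos : (0:ℝ) < Real.exp (-β*t) := Real.exp_pos _
        have hule : Real.exp (-β*t) ≤ 1 := Real.exp_le_one_iff.2 (by nlinarith [htm.1])
        have hXu : Real.exp (2*β*t) * (Real.exp (-β*t) * Real.exp (-β*t)) = 1 := by
          rw [← Real.exp_add, ← Real.exp_add, Real.exp_eq_one_iff]; ring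
        have hEb' := hEb t htIcc
        have hyb := (hb t htIcc).2
        have hEn := hEnonneg t htIcc.1
        have hie := hEineq t htIcc.1
        have hE3 : E t * E t ^ 2 ≤ Real.sqrt 2*Γ*Real.exp (-β*t)*E t^2 :=
          mul_le_mul_of_nonneg_right hEb' (sq_nonneg (E t))
        have hL : 2*E t*E' t + (2*β+(3/4 - 2*β - Real.sqrt 2 * ε * C * Γ))*E t^2
            ≤ 25 * Real.sqrt 2 * ε * C * Γ^3
              * (Real.exp (-β*t)*Real.exp (-β*t)*Real.exp (-β*t)) := by
          have s1 : ε*C*(E t * E t^2) ≤ ε*C*(Real.sqrt 2*Γ*Real.exp (-β*t)*E t^2) :=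
            mul_le_mul_of_nonneg_left hE3 hεC.le
          have s2' : Real.exp (-β*t) * (ε*C*(Real.sqrt 2*Γ*E t^2))
              ≤ 1 * (ε*C*(Real.sqrt 2*Γ*E t^2)) :=
            mul_le_mul_of_nonneg_right hule (by positivity)
          have u1 : y t^2 ≤ 25*Γ^2*(Real.exp (-β*t)*Real.exp (-β*t)) := by
            nlinarith [sq_abs (y t), abs_nonneg (y t)]
          have u2 : y t^2 * E t ≤ 25*Γ^2*(Real.exp (-β*t)*Real.exp (-β*t)) * E t :=
            mul_le_mul_of_nonneg_right u1 hEn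
          have u3 : 25*Γ^2*(Real.exp (-β*t)*Real.exp (-β*t)) * E t
              ≤ 25*Γ^2*(Real.exp (-β*t)*Real.exp (-β*t)) * (Real.sqrt 2*Γ*Real.exp (-β*t)) :=
            mul_le_mul_of_nonneg_left hEb' (by positivity)
          have u4 : ε*C*(y t^2*E t)
              ≤ ε*C*(25*Γ^2*(Real.exp (-β*t)*Real.exp (-β*t))*(Real.sqrt 2*Γ*Real.exp (-β*t))) :=
            mul_le_mul_of_nonneg_left (le_trans u2 u3) hεC.le
          linarith [s1, s2', u4, hie]
        have hbr : (2*E t*E' t + (2*β+(3/4 - 2*β - Real.sqrt 2 * ε * C * Γ))*E t^2)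
            * Real.exp (2*β*t) ≤ 25 * Real.sqrt 2 * ε * C * Γ^3 := by
          have h5 := mul_le_mul_of_nonneg_right hL (Real.exp_pos (2*β*t)).le
          have h6 : 25 * Real.sqrt 2 * ε * C * Γ^3
              * (Real.exp (-β*t)*Real.exp (-β*t)*Real.exp (-β*t)) * Real.exp (2*β*t)
              = 25 * Real.sqrt 2 * ε * C * Γ^3 * Real.exp (-β*t) := by
            linear_combination (25 * Real.sqrt 2 * ε * C * Γ^3 * Real.exp (-β*t)) * hXu
          have h7 : Real.exp (-β*t) * (25 * Real.sqrt 2 * ε * C * Γ^3)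
              ≤ 1 * (25 * Real.sqrt 2 * ε * C * Γ^3) :=
            mul_le_mul_of_nonneg_right hule (by positivity)
          linarith [h6 ▸ h5]
        have h8 : 0 ≤ (25 * Real.sqrt 2 * ε * C * Γ^3
            - (2*E t*E' t + (2*β+(3/4 - 2*β - Real.sqrt 2 * ε * C * Γ))*E t^2)
              * Real.exp (2*β*t))
            * ((3/4 - 2*β - Real.sqrt 2 * ε * C * Γ)
              * Real.exp ((3/4 - 2*β - Real.sqrt 2 * ε * C * Γ)*t)) :=
          mul_nonneg (by linarith)
            (mul_nonneg hδ₀pos.le (Real.exp_pos _).le)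
        nlinarith [h8]
    simp only [mul_zero, Real.exp_zero, mul_one] at hWT
    -- now extract the bound at T
    have hgoal : E T^2 * Real.exp (2*β*T) < 2*Γ^2 := by
      have he1 : 1 ≤ Real.exp ((3/4 - 2*β - Real.sqrt 2 * ε * C * Γ)*T) :=
        Real.one_le_exp (mul_nonneg hδ₀pos.le hT)
      exact extract_aux hδ₀pos (by linarith [hA]) hE0 he1 hWT
    have h9 : Real.exp (2*β*T) * Real.exp (-2*β*T) = 1 := by
      rw [← Real.exp_add, Real.exp_eq_one_iff]; ring
    calc E T^2 = E T^2*Real.exp (2*β*T)*Real.exp (-2*β*T) := by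
          rw [mul_assoc, h9, mul_one]
      _ < 2*Γ^2*Real.exp (-2*β*T) :=
          mul_lt_mul_of_pos_right hgoal (Real.exp_pos _)
  · -- coefficient part
    have h2β : (0:ℝ) < 2 - β := by linarith
    have hBnn : 0 ≤ (2*Real.sqrt 2+2-2*β)*Γ/(2-β) :=
      div_nonneg (mul_nonneg (by linarith) hΓ.le) h2β.le
    have hB4 : (2*Real.sqrt 2+2-2*β)*Γ/(2-β) ≤ 4*Γ := by
      rw [div_le_iff₀ h2β]
      have h := mul_le_mul_of_nonneg_right (show 2*Real.sqrt 2+2-2*β ≤ 8-4*β by linarith) hΓ.le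
      linarith
    have hgb : ∀ t ∈ Set.Icc (0:ℝ) T,
        |g t| ≤ (2*Real.sqrt 2+2-2*β)*Γ*Real.exp (-β*t) := by
      intro t htm
      have h1 := hgbound t htm.1
      have hE1 := hEb t htm
      have hE2 := (hb t htm).1
      have hy1 := (hb t htm).2
      have hexp2 : Real.exp (-2*β*t) = Real.exp (-β*t)*Real.exp (-β*t) := by
        rw [← Real.exp_add]; ring_nf
      have hupos : (0:ℝ) < Real.exp (-β*t) := Real.exp_pos _
      have hule : Real.exp (-β*t) ≤ 1 := Real.exp_le_one_iff.2 (by nlinarith [htm.1])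
      have hEn := hEnonneg t htm.1
      rw [hexp2] at hE2
      have w1 : E t * |y t| ≤ (Real.sqrt 2*Γ*Real.exp (-β*t))*(5*Γ*Real.exp (-β*t)) :=
        mul_le_mul hE1 hy1 (abs_nonneg _) (by positivity)
      have ha1 : E t^2 + E t*|y t|
          ≤ (2+5*Real.sqrt 2)*Γ^2*(Real.exp (-β*t)*Real.exp (-β*t)) := by nlinarith [hE2, w1]
      have ha2 : ε*C*(E t^2 + E t*|y t|)
          ≤ ε*C*((2+5*Real.sqrt 2)*Γ^2*(Real.exp (-β*t)*Real.exp (-β*t))) :=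
        mul_le_mul_of_nonneg_left ha1 hεC.le
      have ha3 : ε*C*((2+5*Real.sqrt 2)*Γ^2*(Real.exp (-β*t)*Real.exp (-β*t)))
          ≤ (2-2*β)*Γ*(Real.exp (-β*t)*Real.exp (-β*t)) := by
        nlinarith [mul_lt_mul_of_pos_left hε2
          (show (0:ℝ) < Γ*(Real.exp (-β*t)*Real.exp (-β*t)) by positivity)]
      have hcoef : (0:ℝ) ≤ (2-2*β)*Γ*Real.exp (-β*t) :=
        mul_nonneg (mul_nonneg (by linarith) hΓ.le) hupos.le
      have ha4 : (2-2*β)*Γ*Real.exp (-β*t)*Real.exp (-β*t)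
          ≤ (2-2*β)*Γ*Real.exp (-β*t)*1 := mul_le_mul_of_nonneg_left hule hcoef
      have h2E : 2 * E t ≤ 2 * (Real.sqrt 2*Γ*Real.exp (-β*t)) := by linarith
      linarith [h1, ha2, ha3, ha4, h2E]
    -- the comparison function
    set B : ℝ := (2*Real.sqrt 2+2-2*β)*Γ/(2-β) with hBdef
    have hBM : (2-β)*B = (2*Real.sqrt 2+2-2*β)*Γ := by
      rw [hBdef]; field_simp
    have hyT : ∀ s : ℝ, s = 1 ∨ s = -1 →
        s * y T ≤ |y 0| * Real.exp (-2*T) + B*(Real.exp (-β*T) - Real.exp (-2*T)) := by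
      intro s hs
      have hPT : (fun t => (|y 0| * Real.exp (-2*t) + B*(Real.exp (-β*t) - Real.exp (-2*t))
            - s * y t) * Real.exp (2*t)) 0
          ≤ (fun t => (|y 0| * Real.exp (-2*t) + B*(Real.exp (-β*t) - Real.exp (-2*t))
            - s * y t) * Real.exp (2*t)) T := by
        apply mono_aux (f := fun t =>
          (|y 0| * Real.exp (-2*t) + B*(Real.exp (-β*t) - Real.exp (-2*t))
            - s * y t) * Real.exp (2*t)) (f' := fun t =>
          (|y 0| * ((-2)*Real.exp (-2*t)) + B*((-β)*Real.exp (-β*t) - (-2)*Real.exp (-2*t))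
            - s * (-2 * y t + g t)) * Real.exp (2*t)
          + (|y 0| * Real.exp (-2*t) + B*(Real.exp (-β*t) - Real.exp (-2*t))
            - s * y t) * (2*Real.exp (2*t))) hT
        · apply ContinuousOn.mul
          · apply ContinuousOn.sub
            · exact ((continuous_const.mul (cont_exp_lin (-2))).add
                (continuous_const.mul ((cont_exp_lin (-β)).sub (cont_exp_lin (-2))))).continuousOn
            · exact (continuousOn_const.mul (hyc.mono Set.Icc_subset_Ici_self))
          · exact (cont_exp_lin 2).continuousOn
        · intro t htm
          have hyt : HasDerivAt y (-2 * y t + g t) t := by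
            rw [← hyODE t (le_of_lt htm.1)]
            exact (hy t (le_of_lt htm.1)).hasDerivAt (Ici_mem_nhds htm.1)
          have d1 := hasDerivAt_exp_lin (-2) t
          have d2 := hasDerivAt_exp_lin (-β) t
          have d3 := hasDerivAt_exp_lin 2 t
          exact (((d1.const_mul _).add ((d2.sub d1).const_mul B)).sub
            (hyt.const_mul s)).mul d3
        · intro t htm
          have htIcc : t ∈ Set.Icc (0:ℝ) T := ⟨le_of_lt htm.1, le_of_lt htm.2⟩
          have hgt := hgb t htIcc
          have hsg : s * g t ≤ (2*Real.sqrt 2+2-2*β)*Γ*Real.exp (-β*t) := by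
            rcases hs with h | h
            · rw [h, one_mul]; linarith [le_abs_self (g t)]
            · rw [h, neg_one_mul]; linarith [neg_abs_le (g t)]
          have hkey : (|y 0| * ((-2)*Real.exp (-2*t)) + B*((-β)*Real.exp (-β*t) - (-2)*Real.exp (-2*t))
                - s * (-2 * y t + g t)) * Real.exp (2*t)
              + (|y 0| * Real.exp (-2*t) + B*(Real.exp (-β*t) - Real.exp (-2*t))
                - s * y t) * (2*Real.exp (2*t))
              = ((2-β)*B*Real.exp (-β*t) - s * g t) * Real.exp (2*t) := by ring
          rw [hkey, hBM]
          exact mul_nonneg (by linarith) (Real.exp_pos _).le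
      simp only at hPT
      rw [show (-2:ℝ)*0 = 0 by ring, show (-β)*(0:ℝ) = 0 by ring,
        show (2:ℝ)*(0:ℝ) = 0 by ring, Real.exp_zero] at hPT
      have hy00 : 0 ≤ |y 0| - s * y 0 := by
        rcases hs with h | h
        · rw [h, one_mul]; linarith [le_abs_self (y 0)]
        · rw [h, neg_one_mul]; linarith [neg_abs_le (y 0)]
      have h0le : (0:ℝ) ≤ (|y 0| * Real.exp (-2*T) + B*(Real.exp (-β*T) - Real.exp (-2*T))
          - s * y T) * Real.exp (2*T) := by
        refine le_trans ?_ hPT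
        have h00 : (|y 0| * 1 + B*(1 - 1) - s * y 0) * 1 = |y 0| - s * y 0 := by ring
        rw [h00]; exact hy00
      nlinarith [h0le, Real.exp_pos (2*T)]
    have hy1 := hyT 1 (Or.inl rfl)
    have hy2 := hyT (-1) (Or.inr rfl)
    rw [one_mul] at hy1
    rw [neg_one_mul] at hy2
    have habs : |y T| ≤ |y 0| * Real.exp (-2*T) + B*(Real.exp (-β*T) - Real.exp (-2*T)) :=
      abs_le.2 ⟨by linarith, hy1⟩
    have hab : Real.exp (-2*T) ≤ Real.exp (-β*T) := Real.exp_le_exp.2 (by nlinarith)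
    have hbpos : (0:ℝ) < Real.exp (-2*T) := Real.exp_pos _
    have t1 : |y 0| * Real.exp (-2*T) < Γ*Real.exp (-β*T) := by
      have q1 := mul_lt_mul_of_pos_right hy0 hbpos
      have q2 := mul_le_mul_of_nonneg_left hab hΓ.le
      linarith
    have t2 : B*(Real.exp (-β*T) - Real.exp (-2*T)) ≤ 4*Γ*Real.exp (-β*T) := by
      have q1 : B*(Real.exp (-β*T) - Real.exp (-2*T)) ≤ B*Real.exp (-β*T) :=
        mul_le_mul_of_nonneg_left (by linarith) hBnn
      have q2 : B*Real.exp (-β*T) ≤ 4*Γ*Real.exp (-β*T) :=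
        mul_le_mul_of_nonneg_right hB4 (Real.exp_pos _).le
      linarith
    calc |y T| ≤ |y 0| * Real.exp (-2*T) + B*(Real.exp (-β*T) - Real.exp (-2*T)) := habs
      _ < 5*Γ*Real.exp (-β*T) := by linarith

set_option maxHeartbeats 1000000 in
/-- Abstract bootstrap argument for Theorem 1 (exponential stability of the
1-D MHD model with `a = 1`, `p = 1`, `q = 0`): if the energy `E ≥ 0` and the
coefficient `y` are continuously differentiable on `[0, ∞)` and satisfy the
differential inequalities
`(d/dt)(E²) ≤ -(3/4)E² + εCE³ + εCy²E` and `y' = -2y + g` with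
`|g| ≤ 2E + εC(E² + E|y|)`, with initial data `E(0)² < 2Γ²`, `|y(0)| < Γ`,
and `ε` small as specified, then `E(t)² ≤ 2Γ²e^{-2βt}` and
`|y(t)| ≤ 5Γe^{-βt}` for all `t ≥ 0`. -/
theorem bootstrap_exponential_decay
    (C Γ β ε : ℝ) (hC : 0 < C) (hΓ : 0 < Γ) (hβ0 : 0 < β) (hβ : β < 3 / 8)
    (hε0 : 0 < ε)
    (hε : ε < min ((3 - 8 * β) / (54 * Real.sqrt 2 * C * Γ))
      ((2 - 2 * β) / ((2 + 5 * Real.sqrt 2) * C * Γ)))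
    (E y g E' y' : ℝ → ℝ)
    (hE : ∀ t ∈ Set.Ici (0 : ℝ), HasDerivWithinAt E (E' t) (Set.Ici 0) t)
    (hE'cont : ContinuousOn E' (Set.Ici 0))
    (hy : ∀ t ∈ Set.Ici (0 : ℝ), HasDerivWithinAt y (y' t) (Set.Ici 0) t)
    (hy'cont : ContinuousOn y' (Set.Ici 0))
    (hEnonneg : ∀ t ≥ (0 : ℝ), 0 ≤ E t)
    (hEineq : ∀ t ≥ (0 : ℝ),
      2 * E t * E' t
        ≤ -(3 / 4) * E t ^ 2 + ε * C * E t ^ 3 + ε * C * y t ^ 2 * E t)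
    (hgcont : ContinuousOn g (Set.Ici 0))
    (hyODE : ∀ t ≥ (0 : ℝ), y' t = -2 * y t + g t)
    (hgbound : ∀ t ≥ (0 : ℝ),
      |g t| ≤ 2 * E t + ε * C * (E t ^ 2 + E t * |y t|))
    (hE0 : E 0 ^ 2 < 2 * Γ ^ 2) (hy0 : |y 0| < Γ) :
    ∀ t ≥ (0 : ℝ),
      E t ^ 2 ≤ 2 * Γ ^ 2 * Real.exp (-2 * β * t)
      ∧ |y t| ≤ 5 * Γ * Real.exp (-β * t) := by
  have hs2 : Real.sqrt 2 ^ 2 = 2 := Real.sq_sqrt (by norm_num)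
  have hs2pos : (0:ℝ) < Real.sqrt 2 := Real.sqrt_pos.2 (by norm_num)
  have h54 : (0:ℝ) < 54 * Real.sqrt 2 * C * Γ := by positivity
  have h25 : (0:ℝ) < (2 + 5 * Real.sqrt 2) * C * Γ := by positivity
  have hε1 : ε * (54 * Real.sqrt 2 * C * Γ) < 3 - 8 * β := by
    have h := (lt_min_iff.1 hε).1
    calc ε * (54 * Real.sqrt 2 * C * Γ)
        < ((3 - 8*β)/(54 * Real.sqrt 2 * C * Γ)) * (54 * Real.sqrt 2 * C * Γ) :=
          mul_lt_mul_of_pos_right h h54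
      _ = 3 - 8*β := by field_simp
  have hε2 : ε * ((2 + 5 * Real.sqrt 2) * C * Γ) < 2 - 2 * β := by
    have h := (lt_min_iff.1 hε).2
    calc ε * ((2 + 5 * Real.sqrt 2) * C * Γ)
        < ((2 - 2*β)/((2 + 5 * Real.sqrt 2) * C * Γ)) * ((2 + 5 * Real.sqrt 2) * C * Γ) :=
          mul_lt_mul_of_pos_right h h25
      _ = 2 - 2*β := by field_simp
  have hEc : ContinuousOn E (Set.Ici 0) := fun t ht => (hE t ht).continuousWithinAt
  have hyc : ContinuousOn y (Set.Ici 0) := fun t ht => (hy t ht).continuousWithinAt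
  intro t₀ ht₀
  by_contra hcon
  set Bad : Set ℝ := {s : ℝ | 0 ≤ s ∧ ¬(E s ^ 2 ≤ 2 * Γ ^ 2 * Real.exp (-2 * β * s)
      ∧ |y s| ≤ 5 * Γ * Real.exp (-β * s))} with hBaddef
  have hne : Bad.Nonempty := ⟨t₀, ht₀, hcon⟩
  have hbdd : BddBelow Bad := ⟨0, fun x hx => hx.1⟩
  set T := sInf Bad with hTdef
  have hT0 : 0 ≤ T := le_csInf hne fun x hx => hx.1
  have hgood : ∀ t ∈ Set.Ico (0:ℝ) T,
      E t ^ 2 ≤ 2 * Γ ^ 2 * Real.exp (-2 * β * t)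
      ∧ |y t| ≤ 5 * Γ * Real.exp (-β * t) := by
    intro t htm
    by_contra hc
    exact absurd (csInf_le hbdd ⟨htm.1, hc⟩) (not_le.2 htm.2)
  have hcw1 : ContinuousWithinAt (fun s => 2 * Γ ^ 2 * Real.exp (-2 * β * s) - E s ^ 2)
      (Set.Ici 0) T := by
    apply ContinuousWithinAt.sub
    · exact (continuous_const.mul (cont_exp_lin (-2*β))).continuousWithinAt
    · exact ((hEc T hT0).pow 2)
  have hcw2 : ContinuousWithinAt (fun s => 5 * Γ * Real.exp (-β * s) - |y s|)
      (Set.Ici 0) T := by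
    apply ContinuousWithinAt.sub
    · exact (continuous_const.mul (cont_exp_lin (-β))).continuousWithinAt
    · exact (hyc T hT0).abs
  have hgoodT : E T ^ 2 ≤ 2 * Γ ^ 2 * Real.exp (-2 * β * T)
      ∧ |y T| ≤ 5 * Γ * Real.exp (-β * T) := by
    rcases eq_or_lt_of_le hT0 with h0T | h0T
    · rw [← h0T]
      rw [show (-2)*β*(0:ℝ) = 0 by ring, show (-β)*(0:ℝ) = 0 by ring, Real.exp_zero]
      constructor
      · linarith
      · nlinarith [abs_nonneg (y 0)]
    · have hneB : (𝓝[Set.Ico (0:ℝ) T] T).NeBot := by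
        rw [← mem_closure_iff_nhdsWithin_neBot, closure_Ico (ne_of_lt h0T)]
        exact Set.right_mem_Icc.2 hT0
      constructor
      · have htend : ContinuousWithinAt (fun s => 2 * Γ ^ 2 * Real.exp (-2 * β * s) - E s ^ 2)
            (Set.Ico 0 T) T := hcw1.mono Set.Ico_subset_Ici_self
        have hev : ∀ᶠ x in 𝓝[Set.Ico (0:ℝ) T] T,
            0 ≤ 2 * Γ ^ 2 * Real.exp (-2 * β * x) - E x ^ 2 :=
          eventually_mem_nhdsWithin.mono fun x hx => by linarith [(hgood x hx).1]
        have hlim : (0:ℝ) ≤ 2 * Γ ^ 2 * Real.exp (-2 * β * T) - E T ^ 2 :=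
          ge_of_tendsto htend hev
        linarith
      · have htend : ContinuousWithinAt (fun s => 5 * Γ * Real.exp (-β * s) - |y s|)
            (Set.Ico 0 T) T := hcw2.mono Set.Ico_subset_Ici_self
        have hev : ∀ᶠ x in 𝓝[Set.Ico (0:ℝ) T] T,
            0 ≤ 5 * Γ * Real.exp (-β * x) - |y x| :=
          eventually_mem_nhdsWithin.mono fun x hx => by linarith [(hgood x hx).2]
        have hlim : (0:ℝ) ≤ 5 * Γ * Real.exp (-β * T) - |y T| :=
          ge_of_tendsto htend hev
        linarith
  have hIcc : ∀ t ∈ Set.Icc (0:ℝ) T,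
      E t ^ 2 ≤ 2 * Γ ^ 2 * Real.exp (-2 * β * t)
      ∧ |y t| ≤ 5 * Γ * Real.exp (-β * t) := by
    intro t htm
    rcases eq_or_lt_of_le htm.2 with h | h
    · rw [h]; exact hgoodT
    · exact hgood t ⟨htm.1, h⟩
  have hstrict := key_step C Γ β ε hC hΓ hβ0 hβ hε0 hε1 hε2 E y g E' y'
    hE hy hEnonneg hEineq hyODE hgbound hE0 hy0 T hT0 hIcc
  have hev : ∀ᶠ x in 𝓝[Set.Ici (0:ℝ)] T,
      0 < 2 * Γ ^ 2 * Real.exp (-2 * β * x) - E x ^ 2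
      ∧ 0 < 5 * Γ * Real.exp (-β * x) - |y x| := by
    apply Filter.Eventually.and
    · have hp1 : (0:ℝ) < 2 * Γ ^ 2 * Real.exp (-2 * β * T) - E T ^ 2 := by
        linarith [hstrict.1]
      exact hcw1.eventually (eventually_gt_nhds hp1)
    · have hp2 : (0:ℝ) < 5 * Γ * Real.exp (-β * T) - |y T| := by
        linarith [hstrict.2]
      exact hcw2.eventually (eventually_gt_nhds hp2)
  rw [Filter.eventually_iff_exists_mem] at hev
  obtain ⟨v, hv, hvp⟩ := hev
  rw [Metric.mem_nhdsWithin_iff] at hv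
  obtain ⟨δ, hδ, hsub⟩ := hv
  obtain ⟨b, hbB, hbl⟩ := (csInf_lt_iff hbdd hne).1
    (show sInf Bad < T + δ by rw [← hTdef]; linarith)
  have hTb : T ≤ b := csInf_le hbdd hbB
  have hbmem : b ∈ v := by
    apply hsub
    constructor
    · rw [Metric.mem_ball, Real.dist_eq, abs_of_nonneg (by linarith)]
      linarith
    · exact hbB.1
  have hgb := hvp b hbmem
  exact hbB.2 ⟨by linarith [hgb.1], by linarith [hgb.2]⟩
end
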